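/- arXiv:2504.09931 — 8 statements merged into one kernel-verified Lean document; each statement's English description precedes it below -/
import Mathlib

section
/- Let X be a real normed vector space, K ⊆ X a convex subset, A : K → X* a map, h ∈ X*, and let u ∈ K solve the variational inequality. Let v ∈ K and let M ≥ 0 satisfy −⟨A v − h, w − v⟩ ≤ M ‖w − v‖ for all w ∈ K. Suppose f, f* : [0,∞) → ℝ satisfy Young's inequality s·t ≤ f(s) + f*(t) for all s, t ≥ 0. Then ⟨A u − A v, u − v⟩ + ⟨A u − h, v − u⟩ − f(‖u − v‖) ≤ f*(M). -/
/-- The abstract a posteriori estimate in Young's inequality form: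
`⟨A u - A v, u - v⟩ + ⟨A u - h, v - u⟩ - f(‖u - v‖) ≤ f*(M)`. -/
theorem variational_inequality_aposteriori_young
    {X : Type*} [NormedAddCommGroup X] [NormedSpace ℝ X]
    (K : Set X) (hK : Convex ℝ K)
    (A : X → (X →L[ℝ] ℝ)) (h : X →L[ℝ] ℝ)
    (u : X) (hu : u ∈ K) (hVI : ∀ w ∈ K, 0 ≤ (A u - h) (w - u))
    (v : X) (hv : v ∈ K)
    (M : ℝ) (hM : 0 ≤ M)
    (hMbound : ∀ w ∈ K, -(A v - h) (w - v) ≤ M * ‖w - v‖)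
    (f fstar : ℝ → ℝ)
    (hYoung : ∀ s t : ℝ, 0 ≤ s → 0 ≤ t → s * t ≤ f s + fstar t) :
    (A u - A v) (u - v) + (A u - h) (v - u) - f ‖u - v‖ ≤ fstar M := by
  have h1 := hMbound u hu
  have h2 := hYoung ‖u - v‖ M (norm_nonneg _) hM
  have key : (A u - A v) (u - v) + (A u - h) (v - u) = -(A v - h) (u - v) := by
    simp only [ContinuousLinearMap.sub_apply, map_sub]
    ring
  rw [key]
  nlinarith [h1, h2]
end

section
/- Let 1 < p ≤ 2, let N ≥ 1, and let M be a symmetric linear map on ℝ^N with |M ξ| ≤ Λ |ξ| for all ξ ∈ ℝ^N, where Λ ≥ 0. Then for all a, b ∈ ℝ^N, ||b|^{p−2} M b − |a|^{p−2} M a| ≤ Λ · ((3 − p)/(p − 1)) · 2^{p−1} · |b − a|^{p−1}. -/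
/-! The map `x ↦ ‖x‖ ^ (p - 2) • x` is `(p - 1)`-Hölder with constant `2` in any real normed
space when `1 ≤ p ≤ 2`. If `‖b - a‖` dominates `‖b‖ ≥ ‖a‖`, the triangle inequality suffices;
otherwise split the difference as `‖b‖ ^ (p - 2) • (b - a) + (‖b‖ ^ (p - 2) - ‖a‖ ^ (p - 2)) • a`
and bound the scalar factor of the second term by a one-variable inequality, reduced by
homogeneity to `1 - r ^ (p - 2) ≤ (r - 1) ^ (p - 1)` for `r ≥ 1`. Composing with `M` costs a
factor `Λ`, and `2 ≤ (3 - p) / (p - 1) * 2 ^ (p - 1)` by Bernoulli's inequality `2 ^ (2 - p) ≤ 3 - p`.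
-/

open Real

lemma one_sub_rpow_le_sub_one_rpow {p r : ℝ} (hp1 : 1 ≤ p) (hp2 : p ≤ 2) (hr : 1 ≤ r) :
    1 - r ^ (p - 2) ≤ (r - 1) ^ (p - 1) := by
  rcases le_or_gt 1 (r - 1) with hr2 | hr2
  · have := one_le_rpow hr2 (by linarith : 0 ≤ p - 1)
    have := rpow_nonneg (by linarith : 0 ≤ r) (p - 2)
    linarith
  · have h_inv : r⁻¹ ≤ r ^ (p - 2) := by
      rw [← rpow_neg_one]
      exact rpow_le_rpow_of_exponent_le hr (by linarith)
    have h_lin : 1 - r⁻¹ ≤ r - 1 := by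
      have : r * r⁻¹ = 1 := mul_inv_cancel₀ (by positivity)
      nlinarith [inv_pos.2 (by linarith : 0 < r)]
    have := self_le_rpow_of_le_one (by linarith) hr2.le (by linarith : p - 1 ≤ 1)
    linarith

lemma rpow_sub_two_sub_rpow_sub_two_mul_le {p s t : ℝ} (hp1 : 1 ≤ p) (hp2 : p ≤ 2)
    (hs : 0 < s) (hst : s ≤ t) :
    (s ^ (p - 2) - t ^ (p - 2)) * s ≤ (t - s) ^ (p - 1) := by
  obtain ⟨r, hr, rfl⟩ : ∃ r, 1 ≤ r ∧ t = s * r :=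
    ⟨t / s, (one_le_div hs).2 hst, by field_simp⟩
  have h_lhs : (s ^ (p - 2) - (s * r) ^ (p - 2)) * s = s ^ (p - 1) * (1 - r ^ (p - 2)) := by
    rw [mul_rpow hs.le (by linarith), show p - 1 = p - 2 + 1 by ring, rpow_add_one hs.ne']
    ring
  have h_rhs : (s * r - s) ^ (p - 1) = s ^ (p - 1) * (r - 1) ^ (p - 1) := by
    rw [← mul_rpow hs.le (by linarith), mul_sub, mul_one]
  rw [h_lhs, h_rhs]
  exact mul_le_mul_of_nonneg_left (one_sub_rpow_le_sub_one_rpow hp1 hp2 hr) (by positivity)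

section NormedSpace

variable {E : Type*} [NormedAddCommGroup E] [NormedSpace ℝ E] {p : ℝ}

lemma norm_rpow_smul_self_le (x : E) : ‖‖x‖ ^ (p - 2) • x‖ ≤ ‖x‖ ^ (p - 1) := by
  rcases eq_or_ne x 0 with rfl | hx
  · simp only [norm_zero, smul_zero]
    positivity
  · have hx0 : 0 < ‖x‖ := norm_pos_iff.2 hx
    rw [norm_smul, norm_of_nonneg (by positivity), show p - 1 = p - 2 + 1 by ring,
      rpow_add_one hx0.ne']

lemma norm_rpow_sub_rpow_smul_le (hp1 : 1 ≤ p) (hp2 : p ≤ 2) {a b : E} (hab : ‖a‖ ≤ ‖b‖) :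
    ‖(‖b‖ ^ (p - 2) - ‖a‖ ^ (p - 2)) • a‖ ≤ ‖b - a‖ ^ (p - 1) := by
  rcases eq_or_ne a 0 with rfl | ha
  · simp only [norm_zero, smul_zero]
    positivity
  have ha0 : 0 < ‖a‖ := norm_pos_iff.2 ha
  have h_mono : ‖b‖ ^ (p - 2) ≤ ‖a‖ ^ (p - 2) := rpow_le_rpow_of_nonpos ha0 hab (by linarith)
  calc ‖(‖b‖ ^ (p - 2) - ‖a‖ ^ (p - 2)) • a‖ = (‖a‖ ^ (p - 2) - ‖b‖ ^ (p - 2)) * ‖a‖ := by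
        rw [norm_smul, norm_of_nonpos (by linarith), neg_sub]
    _ ≤ (‖b‖ - ‖a‖) ^ (p - 1) := rpow_sub_two_sub_rpow_sub_two_mul_le hp1 hp2 ha0 hab
    _ ≤ ‖b - a‖ ^ (p - 1) := by
        gcongr
        exact norm_sub_norm_le b a

lemma norm_rpow_smul_sub_rpow_smul_le_of_norm_le (hp1 : 1 ≤ p) (hp2 : p ≤ 2) {a b : E}
    (hab : ‖a‖ ≤ ‖b‖) :
    ‖‖b‖ ^ (p - 2) • b - ‖a‖ ^ (p - 2) • a‖ ≤ 2 * ‖b - a‖ ^ (p - 1) := by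
  rcases lt_or_ge ‖b‖ ‖b - a‖ with h_far | h_near
  · calc ‖‖b‖ ^ (p - 2) • b - ‖a‖ ^ (p - 2) • a‖
        ≤ ‖b‖ ^ (p - 1) + ‖a‖ ^ (p - 1) :=
          (norm_sub_le _ _).trans (add_le_add (norm_rpow_smul_self_le b)
            (norm_rpow_smul_self_le a))
      _ ≤ ‖b - a‖ ^ (p - 1) + ‖b - a‖ ^ (p - 1) := by
          gcongr
          exact hab.trans h_far.le
      _ = 2 * ‖b - a‖ ^ (p - 1) := by ring
  rcases eq_or_ne b a with rfl | hne
  · simp only [sub_self, norm_zero]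
    positivity
  have hba : 0 < ‖b - a‖ := norm_pos_iff.2 (sub_ne_zero.2 hne)
  have h_first : ‖‖b‖ ^ (p - 2) • (b - a)‖ ≤ ‖b - a‖ ^ (p - 1) :=
    calc ‖‖b‖ ^ (p - 2) • (b - a)‖ = ‖b‖ ^ (p - 2) * ‖b - a‖ := by
          rw [norm_smul, norm_of_nonneg (by positivity)]
      _ ≤ ‖b - a‖ ^ (p - 2) * ‖b - a‖ := by
          gcongr ?_ * _
          exact rpow_le_rpow_of_nonpos hba h_near (by linarith)
      _ = ‖b - a‖ ^ (p - 1) := by rw [show p - 1 = p - 2 + 1 by ring, rpow_add_one hba.ne']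
  have h_second := norm_rpow_sub_rpow_smul_le hp1 hp2 hab
  calc ‖‖b‖ ^ (p - 2) • b - ‖a‖ ^ (p - 2) • a‖
      = ‖‖b‖ ^ (p - 2) • (b - a) + (‖b‖ ^ (p - 2) - ‖a‖ ^ (p - 2)) • a‖ := by
        rw [smul_sub, sub_smul, sub_add_sub_cancel]
    _ ≤ ‖b - a‖ ^ (p - 1) + ‖b - a‖ ^ (p - 1) :=
        (norm_add_le _ _).trans (add_le_add h_first h_second)
    _ = 2 * ‖b - a‖ ^ (p - 1) := by ring

lemma norm_rpow_smul_sub_rpow_smul_le (hp1 : 1 ≤ p) (hp2 : p ≤ 2) (a b : E) :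
    ‖‖b‖ ^ (p - 2) • b - ‖a‖ ^ (p - 2) • a‖ ≤ 2 * ‖b - a‖ ^ (p - 1) := by
  rcases le_total ‖a‖ ‖b‖ with hab | hba
  · exact norm_rpow_smul_sub_rpow_smul_le_of_norm_le hp1 hp2 hab
  · rw [norm_sub_rev, norm_sub_rev b a]
    exact norm_rpow_smul_sub_rpow_smul_le_of_norm_le hp1 hp2 hba

end NormedSpace

lemma two_le_three_sub_div_sub_one_mul_two_rpow {p : ℝ} (hp1 : 1 < p) (hp2 : p ≤ 2) :
    2 ≤ (3 - p) / (p - 1) * 2 ^ (p - 1) := by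
  have h_bernoulli : (2 : ℝ) ^ (2 - p) ≤ 3 - p := by
    have := rpow_one_add_le_one_add_mul_self (s := 1) (by norm_num)
      (by linarith : 0 ≤ 2 - p) (by linarith)
    norm_num at this
    linarith
  have h_two : (2 : ℝ) ≤ (3 - p) * 2 ^ (p - 1) :=
    calc (2 : ℝ) = 2 ^ (2 - p) * 2 ^ (p - 1) := by rw [← rpow_add two_pos]; norm_num
      _ ≤ (3 - p) * 2 ^ (p - 1) := by gcongr
  rw [div_mul_eq_mul_div]
  exact h_two.trans (le_div_self (by positivity) (by linarith) (by linarith))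

theorem anisotropic_lipschitz_p_le_two_general
    (p : ℝ) (hp1 : 1 < p) (hp2 : p ≤ 2)
    (N : ℕ)
    (M : EuclideanSpace ℝ (Fin N) →ₗ[ℝ] EuclideanSpace ℝ (Fin N))
    (Λ : ℝ) (hΛ : 0 ≤ Λ)
    (hbound : ∀ ξ : EuclideanSpace ℝ (Fin N), ‖M ξ‖ ≤ Λ * ‖ξ‖)
    (a b : EuclideanSpace ℝ (Fin N)) :
    ‖‖b‖ ^ (p - 2) • M b - ‖a‖ ^ (p - 2) • M a‖
      ≤ Λ * ((3 - p) / (p - 1)) * (2 : ℝ) ^ (p - 1) * ‖b - a‖ ^ (p - 1) := by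
  have h_const := two_le_three_sub_div_sub_one_mul_two_rpow hp1 hp2
  calc ‖‖b‖ ^ (p - 2) • M b - ‖a‖ ^ (p - 2) • M a‖
      = ‖M (‖b‖ ^ (p - 2) • b - ‖a‖ ^ (p - 2) • a)‖ := by rw [map_sub, map_smul, map_smul]
    _ ≤ Λ * ‖‖b‖ ^ (p - 2) • b - ‖a‖ ^ (p - 2) • a‖ := hbound _
    _ ≤ Λ * (2 * ‖b - a‖ ^ (p - 1)) := by
        gcongr
        exact norm_rpow_smul_sub_rpow_smul_le hp1.le hp2 a b
    _ ≤ Λ * ((3 - p) / (p - 1) * 2 ^ (p - 1) * ‖b - a‖ ^ (p - 1)) := by gcongr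
    _ = Λ * ((3 - p) / (p - 1)) * (2 : ℝ) ^ (p - 1) * ‖b - a‖ ^ (p - 1) := by ring

/-- Anisotropic Lipschitz-type inequality for `1 < p ≤ 2`:
`||b|^{p-2} M b - |a|^{p-2} M a| ≤ Λ ((3-p)/(p-1)) 2^{p-1} |b - a|^{p-1}`. -/
theorem anisotropic_lipschitz_p_le_two
    (p : ℝ) (hp1 : 1 < p) (hp2 : p ≤ 2)
    (N : ℕ) (hN : 1 ≤ N)
    (M : EuclideanSpace ℝ (Fin N) →ₗ[ℝ] EuclideanSpace ℝ (Fin N))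
    (hsymm : ∀ ξ η : EuclideanSpace ℝ (Fin N), (inner ℝ (M ξ) η : ℝ) = inner ℝ ξ (M η))
    (Λ : ℝ) (hΛ : 0 ≤ Λ)
    (hbound : ∀ ξ : EuclideanSpace ℝ (Fin N), ‖M ξ‖ ≤ Λ * ‖ξ‖)
    (a b : EuclideanSpace ℝ (Fin N)) :
    ‖‖b‖ ^ (p - 2) • M b - ‖a‖ ^ (p - 2) • M a‖
      ≤ Λ * ((3 - p) / (p - 1)) * (2 : ℝ) ^ (p - 1) * ‖b - a‖ ^ (p - 1) :=
  anisotropic_lipschitz_p_le_two_general p hp1 hp2 N M Λ hΛ hbound a b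
end

section
/- Let p ≥ 2, let N ≥ 1, and let M be a symmetric linear map on ℝ^N with |M ξ| ≤ Λ |ξ| for all ξ ∈ ℝ^N, where Λ ≥ 0. Then for all a, b ∈ ℝ^N, ||b|^{p−2} M b − |a|^{p−2} M a| ≤ Λ (p − 1) (|a| + |b|)^{p−2} |b − a|. -/
/-!
Since `M` is linear, `‖b‖^(p-2) • M b - ‖a‖^(p-2) • M a = M (‖b‖^q • b - ‖a‖^q • a)` with
`q = p - 2`, so it suffices to show that `x ↦ ‖x‖^q • x` is `(1 + q) max(‖a‖, ‖b‖)^q`-Lipschitz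
between `a` and `b`. For `‖a‖ ≤ ‖b‖` write the difference as
`‖b‖^q • (b - a) + (‖b‖^q - ‖a‖^q) • a`; the second term is controlled by the scalar inequality
`(t^q - s^q) s ≤ q t^q (t - s)`, which follows from `1 - x⁻¹ ≤ log x ≤ x - 1`.
-/

open Real

lemma rpow_sub_rpow_le_mul_log_sub_log (q : ℝ) {s t : ℝ} (hs : 0 < s) (ht : 0 < t) :
    t ^ q - s ^ q ≤ q * t ^ q * (log t - log s) := by
  have hsq : 0 < s ^ q := rpow_pos_of_pos hs q
  have htq : 0 < t ^ q := rpow_pos_of_pos ht q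
  have key := one_sub_inv_le_log_of_pos (div_pos htq hsq)
  rw [inv_div, log_div htq.ne' hsq.ne', log_rpow ht, log_rpow hs] at key
  calc t ^ q - s ^ q = t ^ q * (1 - s ^ q / t ^ q) := by field_simp
    _ ≤ t ^ q * (q * log t - q * log s) := mul_le_mul_of_nonneg_left key htq.le
    _ = q * t ^ q * (log t - log s) := by ring

lemma log_sub_log_mul_le {s t : ℝ} (hs : 0 < s) (ht : 0 < t) :
    (log t - log s) * s ≤ t - s := by
  have key := log_le_sub_one_of_pos (div_pos ht hs)
  rw [log_div ht.ne' hs.ne'] at key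
  calc (log t - log s) * s ≤ (t / s - 1) * s := mul_le_mul_of_nonneg_right key hs.le
    _ = t - s := by field_simp

lemma rpow_sub_rpow_mul_le {q s t : ℝ} (hq : 0 ≤ q) (hs : 0 ≤ s) (hst : s ≤ t) :
    (t ^ q - s ^ q) * s ≤ q * t ^ q * (t - s) := by
  rcases hs.eq_or_lt with rfl | hs
  · have ht : 0 ≤ t := hst
    simpa using mul_nonneg (mul_nonneg hq (rpow_nonneg ht q)) ht
  have ht : 0 < t := hs.trans_le hst
  calc (t ^ q - s ^ q) * s ≤ q * t ^ q * (log t - log s) * s :=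
        mul_le_mul_of_nonneg_right (rpow_sub_rpow_le_mul_log_sub_log q hs ht) hs.le
    _ = q * t ^ q * ((log t - log s) * s) := by ring
    _ ≤ q * t ^ q * (t - s) :=
        mul_le_mul_of_nonneg_left (log_sub_log_mul_le hs ht) (by positivity)

lemma norm_rpow_smul_sub_rpow_smul_le_s8 {E : Type*} [SeminormedAddCommGroup E] [NormedSpace ℝ E]
    {q : ℝ} (hq : 0 ≤ q) (a b : E) :
    ‖‖b‖ ^ q • b - ‖a‖ ^ q • a‖ ≤ (1 + q) * max ‖a‖ ‖b‖ ^ q * ‖b - a‖ := by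
  wlog hab : ‖a‖ ≤ ‖b‖ generalizing a b
  · simpa only [norm_sub_rev b a, norm_sub_rev (‖a‖ ^ q • a), max_comm]
      using this b a (le_of_not_ge hab)
  rw [max_eq_right hab]
  have hdecomp : ‖b‖ ^ q • b - ‖a‖ ^ q • a = ‖b‖ ^ q • (b - a) + (‖b‖ ^ q - ‖a‖ ^ q) • a := by
    rw [smul_sub, sub_smul]; abel
  have hmono : ‖a‖ ^ q ≤ ‖b‖ ^ q := rpow_le_rpow (norm_nonneg a) hab hq
  have hnorms : ‖b‖ - ‖a‖ ≤ ‖b - a‖ := norm_sub_norm_le b a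
  calc ‖‖b‖ ^ q • b - ‖a‖ ^ q • a‖
      ≤ ‖b‖ ^ q * ‖b - a‖ + (‖b‖ ^ q - ‖a‖ ^ q) * ‖a‖ := by
        rw [hdecomp]
        refine (norm_add_le _ _).trans_eq ?_
        rw [norm_smul, norm_smul, norm_of_nonneg (by positivity),
          norm_of_nonneg (sub_nonneg.mpr hmono)]
    _ ≤ ‖b‖ ^ q * ‖b - a‖ + q * ‖b‖ ^ q * (‖b‖ - ‖a‖) := by
        grw [rpow_sub_rpow_mul_le hq (norm_nonneg a) hab]
    _ ≤ ‖b‖ ^ q * ‖b - a‖ + q * ‖b‖ ^ q * ‖b - a‖ := by gcongr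
    _ = (1 + q) * ‖b‖ ^ q * ‖b - a‖ := by ring

theorem anisotropic_lipschitz_p_ge_two_general
    (p : ℝ) (hp : 2 ≤ p)
    (N : ℕ)
    (M : EuclideanSpace ℝ (Fin N) →ₗ[ℝ] EuclideanSpace ℝ (Fin N))
    (Λ : ℝ) (hΛ : 0 ≤ Λ)
    (hbound : ∀ ξ : EuclideanSpace ℝ (Fin N), ‖M ξ‖ ≤ Λ * ‖ξ‖)
    (a b : EuclideanSpace ℝ (Fin N)) :
    ‖‖b‖ ^ (p - 2) • M b - ‖a‖ ^ (p - 2) • M a‖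
      ≤ Λ * (p - 1) * (‖a‖ + ‖b‖) ^ (p - 2) * ‖b - a‖ := by
  have hq : 0 ≤ p - 2 := by linarith
  have hmax : max ‖a‖ ‖b‖ ≤ ‖a‖ + ‖b‖ :=
    max_le (le_add_of_nonneg_right (norm_nonneg b)) (le_add_of_nonneg_left (norm_nonneg a))
  calc ‖‖b‖ ^ (p - 2) • M b - ‖a‖ ^ (p - 2) • M a‖
      = ‖M (‖b‖ ^ (p - 2) • b - ‖a‖ ^ (p - 2) • a)‖ := by rw [map_sub, map_smul, map_smul]
    _ ≤ Λ * ‖‖b‖ ^ (p - 2) • b - ‖a‖ ^ (p - 2) • a‖ := hbound _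
    _ ≤ Λ * ((1 + (p - 2)) * max ‖a‖ ‖b‖ ^ (p - 2) * ‖b - a‖) :=
        mul_le_mul_of_nonneg_left (norm_rpow_smul_sub_rpow_smul_le_s8 hq a b) hΛ
    _ ≤ Λ * ((1 + (p - 2)) * (‖a‖ + ‖b‖) ^ (p - 2) * ‖b - a‖) := by
        gcongr
    _ = Λ * (p - 1) * (‖a‖ + ‖b‖) ^ (p - 2) * ‖b - a‖ := by ring

/-- Anisotropic Lipschitz-type inequality for `p ≥ 2`:
`||b|^{p-2} M b - |a|^{p-2} M a| ≤ Λ (p-1) (|a| + |b|)^{p-2} |b - a|`. -/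
theorem anisotropic_lipschitz_p_ge_two
    (p : ℝ) (hp : 2 ≤ p)
    (N : ℕ) (hN : 1 ≤ N)
    (M : EuclideanSpace ℝ (Fin N) →ₗ[ℝ] EuclideanSpace ℝ (Fin N))
    (hsymm : ∀ ξ η : EuclideanSpace ℝ (Fin N), (inner ℝ (M ξ) η : ℝ) = inner ℝ ξ (M η))
    (Λ : ℝ) (hΛ : 0 ≤ Λ)
    (hbound : ∀ ξ : EuclideanSpace ℝ (Fin N), ‖M ξ‖ ≤ Λ * ‖ξ‖)
    (a b : EuclideanSpace ℝ (Fin N)) :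
    ‖‖b‖ ^ (p - 2) • M b - ‖a‖ ^ (p - 2) • M a‖
      ≤ Λ * (p - 1) * (‖a‖ + ‖b‖) ^ (p - 2) * ‖b - a‖ :=
  anisotropic_lipschitz_p_ge_two_general p hp N M Λ hΛ hbound a b
end

section
/- Let 1 < p < 2 and N ≥ 1. Then for all a, b ∈ ℝ^N not both zero, (|b|^{p−2} b − |a|^{p−2} a) · (b − a) ≥ (p − 1) · |b − a|² / (|b| + |a|)^{2−p}. -/
/-!
Write `A = ‖a‖`, `B = ‖b‖`, `t = ⟪a, b⟫`. Both sides of the inequality are affine in `t`, which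
ranges over `[-AB, AB]` by Cauchy–Schwarz, so it suffices to check the two collinear cases
`t = ±AB`. For `t = AB` the inequality becomes
`(p-1)(A+B)^{p-2}(B-A)² ≤ (B^{p-1} - A^{p-1})(B-A)`, which follows from concavity of `x ↦ x^{p-1}`
(tangent line at `max A B`) and `(A+B)^{p-2} ≤ (max A B)^{p-2}`. For `t = -AB` it becomes
`(p-1)(A+B)^{p-1} ≤ A^{p-1} + B^{p-1}`, i.e. subadditivity of `x ↦ x^{p-1}`.
-/

open Real

lemma Real.rpow_sub_one_mul_self {x r : ℝ} (hx : 0 ≤ x) (hr : r ≠ 0) :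
    x ^ (r - 1) * x = x ^ r := by
  rw [← rpow_add_one' hx (by simpa using hr), sub_add_cancel]

lemma Real.rpow_le_rpow_add_mul_sub {r A B : ℝ} (hr₀ : 0 ≤ r) (hr₁ : r ≤ 1) (hA : 0 ≤ A)
    (hB : 0 < B) : A ^ r ≤ B ^ r + r * B ^ (r - 1) * (A - B) := by
  have bernoulli := rpow_one_add_le_one_add_mul_self (s := A / B - 1)
    (by linarith [div_nonneg hA hB.le]) hr₀ hr₁
  rw [add_sub_cancel, div_rpow hA hB.le, div_le_iff₀ (rpow_pos_of_pos hB r)] at bernoulli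
  calc A ^ r ≤ (1 + r * (A / B - 1)) * B ^ r := bernoulli
    _ = B ^ r + r * B ^ (r - 1) * (A - B) := by
      rw [rpow_sub_one hB.ne']
      field_simp

lemma Real.mul_add_rpow_sub_one_mul_sq_le {r A B : ℝ} (hr₀ : 0 ≤ r) (hr₁ : r ≤ 1)
    (hA : 0 ≤ A) (hB : 0 ≤ B) (hAB : 0 < A + B) :
    r * (A + B) ^ (r - 1) * (B - A) ^ 2 ≤ (B ^ r - A ^ r) * (B - A) := by
  wlog h : A ≤ B generalizing A B
  · have := this hB hA (by linarith) (by linarith)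
    rw [add_comm] at this
    linarith
  have hB' : 0 < B := by linarith
  have tangent := rpow_le_rpow_add_mul_sub hr₀ hr₁ hA hB'
  have decreasing : (A + B) ^ (r - 1) ≤ B ^ (r - 1) :=
    rpow_le_rpow_of_nonpos hB' (by linarith) (by linarith)
  calc r * (A + B) ^ (r - 1) * (B - A) ^ 2 ≤ r * B ^ (r - 1) * (B - A) ^ 2 := by gcongr
    _ = (r * B ^ (r - 1) * (B - A)) * (B - A) := by ring
    _ ≤ (B ^ r - A ^ r) * (B - A) := by
        gcongr
        linarith

lemma add_mul_nonneg_of_abs_le {c m s t : ℝ} (ht : |t| ≤ s) (h_pos : 0 ≤ c + m * s)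
    (h_neg : 0 ≤ c - m * s) : 0 ≤ c + m * t := by
  obtain ⟨ht₁, ht₂⟩ := abs_le.mp ht
  rcases le_total 0 m with hm | hm
  · nlinarith
  · nlinarith

lemma pLaplacian_inner_bound_of_abs_le {p A B t : ℝ} (hp₁ : 1 < p) (hp₂ : p < 2) (hA : 0 ≤ A)
    (hB : 0 ≤ B) (hAB : 0 < A + B) (ht : |t| ≤ A * B) :
    (p - 1) * (A + B) ^ (p - 2) * (B ^ 2 - 2 * t + A ^ 2)
      ≤ B ^ (p - 2) * (B ^ 2 - t) + A ^ (p - 2) * (A ^ 2 - t) := by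
  obtain ⟨r, rfl⟩ : ∃ r, p = r + 1 := ⟨p - 1, by ring⟩
  rw [show r + 1 - 2 = r - 1 by ring, add_sub_cancel_right]
  have hr₀ : 0 ≤ r := by linarith
  have hr₁ : r ≤ 1 := by linarith
  have hr : r ≠ 0 := by linarith
  have aligned := mul_add_rpow_sub_one_mul_sq_le hr₀ hr₁ hA hB hAB
  have opposite : r * (A + B) ^ r ≤ A ^ r + B ^ r :=
    (mul_le_of_le_one_left (rpow_nonneg hAB.le r) hr₁).trans (rpow_add_le_add_rpow hA hB hr₀ hr₁)
  have hA' := rpow_sub_one_mul_self hA hr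
  have hB' := rpow_sub_one_mul_self hB hr
  have hAB' := rpow_sub_one_mul_self hAB.le hr
  have := add_mul_nonneg_of_abs_le
    (c := B ^ (r - 1) * B ^ 2 + A ^ (r - 1) * A ^ 2 - r * (A + B) ^ (r - 1) * (B ^ 2 + A ^ 2))
    (m := 2 * r * (A + B) ^ (r - 1) - B ^ (r - 1) - A ^ (r - 1)) ht ?_ ?_
  · linarith
  · linear_combination aligned - (B - A) * hB' + (B - A) * hA'
  · linear_combination (A + B) * opposite - (A + B) * hB' - (A + B) * hA' + r * (A + B) * hAB'

theorem pLaplacian_monotonicity_p_lt_two_general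
    (p : ℝ) (hp1 : 1 < p) (hp2 : p < 2)
    (N : ℕ)
    (a b : EuclideanSpace ℝ (Fin N)) (hab : ¬(a = 0 ∧ b = 0)) :
    (p - 1) * (‖b - a‖ ^ 2 / (‖b‖ + ‖a‖) ^ (2 - p))
      ≤ (inner ℝ (‖b‖ ^ (p - 2) • b - ‖a‖ ^ (p - 2) • a) (b - a) : ℝ) := by
  have hpos : 0 < ‖a‖ + ‖b‖ := by
    rcases not_and_or.mp hab with ha | hb
    · exact add_pos_of_pos_of_nonneg (norm_pos_iff.mpr ha) (norm_nonneg b)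
    · exact add_pos_of_nonneg_of_pos (norm_nonneg a) (norm_pos_iff.mpr hb)
  have key := pLaplacian_inner_bound_of_abs_le hp1 hp2 (norm_nonneg a) (norm_nonneg b) hpos
    (abs_real_inner_le_norm a b)
  rw [div_eq_mul_inv, ← rpow_neg (by positivity), neg_sub, norm_sub_sq_real, add_comm ‖b‖]
  simp only [inner_sub_left, inner_sub_right, real_inner_smul_left, real_inner_self_eq_norm_sq,
    real_inner_comm a b]
  linarith

/-- Monotonicity inequality for the `p`-Laplacian vector field, `1 < p < 2`:
`(|b|^{p-2} b - |a|^{p-2} a) · (b - a) ≥ (p-1) |b - a|² / (|b| + |a|)^{2-p}`. -/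
theorem pLaplacian_monotonicity_p_lt_two
    (p : ℝ) (hp1 : 1 < p) (hp2 : p < 2)
    (N : ℕ) (hN : 1 ≤ N)
    (a b : EuclideanSpace ℝ (Fin N)) (hab : ¬(a = 0 ∧ b = 0)) :
    (p - 1) * (‖b - a‖ ^ 2 / (‖b‖ + ‖a‖) ^ (2 - p))
      ≤ (inner ℝ (‖b‖ ^ (p - 2) • b - ‖a‖ ^ (p - 2) • a) (b - a) : ℝ) :=
  pLaplacian_monotonicity_p_lt_two_general p hp1 hp2 N a b hab
end

section
/- Let 1 < p ≤ 2 and let f, g be p-integrable vector fields on a measure space. Then (∫_Ω ||g|^{p−2} g − |f|^{p−2} f|^{p'} dμ)^{1/p'} ≤ 2^{2−p} (∫_Ω |g − f|^p dμ)^{(p−1)/p}, i.e. ‖|g|^{p−2} g − |f|^{p−2} f‖_{p'} ≤ 2^{2−p} ‖g − f‖_p^{p−1}. -/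
open MeasureTheory Real
open scoped RealInnerProductSpace

set_option maxHeartbeats 1000000

section Aux

variable {E : Type*} [NormedAddCommGroup E] [InnerProductSpace ℝ E]

private lemma sub_rpow_le {q x y : ℝ} (hq0 : 0 ≤ q) (hq1 : q ≤ 1) (hx : 0 ≤ x) (hy : 0 ≤ y) :
    (x + y) ^ q ≤ x ^ q + y ^ q := by
  have h := NNReal.rpow_add_le_add_rpow x.toNNReal y.toNNReal hq0 hq1
  have h' := NNReal.coe_le_coe.2 h
  rw [NNReal.coe_rpow, NNReal.coe_add, NNReal.coe_add, NNReal.coe_rpow, NNReal.coe_rpow,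
    Real.coe_toNNReal _ hx, Real.coe_toNNReal _ hy] at h'
  exact h'

private lemma add_rpow_le2 {p x y : ℝ} (hp : 1 ≤ p) (hx : 0 ≤ x) (hy : 0 ≤ y) :
    (x + y) ^ p ≤ 2 ^ (p - 1) * (x ^ p + y ^ p) := by
  have h := NNReal.rpow_add_le_mul_rpow_add_rpow x.toNNReal y.toNNReal hp
  have h' := NNReal.coe_le_coe.2 h
  rw [NNReal.coe_rpow, NNReal.coe_add, NNReal.coe_mul, NNReal.coe_rpow, NNReal.coe_add,
    NNReal.coe_rpow, NNReal.coe_rpow, Real.coe_toNNReal _ hx, Real.coe_toNNReal _ hy] at h'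
  simpa using h'

private lemma sq_rpow {x : ℝ} (hx : 0 ≤ x) (q : ℝ) : (x ^ 2) ^ q = (x ^ q) ^ 2 := by
  rw [← Real.rpow_natCast x 2, ← Real.rpow_mul hx, mul_comm, Real.rpow_mul hx,
    Real.rpow_natCast]

/-- Key scalar inequality. -/
private lemma scalar_key {p A B t : ℝ} (hp1 : 1 < p) (hp2 : p < 2)
    (hA : 0 < A) (hAB : A ≤ B)
    (hD1 : (B - A) ^ 2 ≤ B ^ 2 - 2 * t + A ^ 2)
    (hD2 : B ^ 2 - 2 * t + A ^ 2 ≤ (A + B) ^ 2) :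
    B ^ (p-1) * B ^ (p-1) + A ^ (p-1) * A ^ (p-1) - 2 * (B ^ (p-2) * A ^ (p-2)) * t
      ≤ (2:ℝ) ^ (2-p) * (2:ℝ) ^ (2-p) * (B ^ 2 - 2 * t + A ^ 2) ^ (p-1) := by
  have hB : 0 < B := lt_of_lt_of_le hA hAB
  set q : ℝ := p - 1 with hqdef
  have hq0 : 0 < q := by simp [hqdef]; linarith
  have hq1 : q < 1 := by simp [hqdef]; linarith
  set D : ℝ := B ^ 2 - 2 * t + A ^ 2 with hDdef
  set D₁ : ℝ := (B - A) ^ 2 with hD₁def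
  set D₂ : ℝ := (A + B) ^ 2 with hD₂def
  have hD₁₂ : D₁ < D₂ := by nlinarith
  set lam : ℝ := (D - D₁) / (D₂ - D₁) with hlamdef
  have hlam0 : 0 ≤ lam := div_nonneg (by linarith) (by linarith)
  have hlam1 : lam ≤ 1 := by
    rw [hlamdef, div_le_one (by linarith)]; linarith
  have hDcomb : (1 - lam) * D₁ + lam * D₂ = D := by
    have hmul : lam * (D₂ - D₁) = D - D₁ := by
      rw [hlamdef]; exact div_mul_cancel₀ _ (by linarith)
    linear_combination hmul
  have hD₁0 : (0:ℝ) ≤ D₁ := sq_nonneg _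
  have hD₂0 : (0:ℝ) ≤ D₂ := sq_nonneg _
  -- concavity
  have conc := Real.concaveOn_rpow hq0.le hq1.le
  have hconc : (1 - lam) * D₁ ^ q + lam * D₂ ^ q ≤ D ^ q := by
    have h := conc.2 (Set.mem_Ici.2 hD₁0) (Set.mem_Ici.2 hD₂0)
      (by linarith : (0:ℝ) ≤ 1 - lam) hlam0 (by ring)
    simp only [smul_eq_mul] at h
    rwa [hDcomb] at h
  -- 1 ≤ 2^(2-p)
  have h2p : (1:ℝ) ≤ (2:ℝ) ^ (2 - p) := by
    calc (1:ℝ) = (2:ℝ) ^ (0:ℝ) := (Real.rpow_zero 2).symm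
    _ ≤ (2:ℝ) ^ (2 - p) := Real.rpow_le_rpow_of_exponent_le one_le_two (by linarith)
  have hK : (0:ℝ) < (2:ℝ) ^ (2-p) * (2:ℝ) ^ (2-p) := by positivity
  -- endpoint 1 : B^q - A^q ≤ 2^(2-p) (B-A)^q
  have hBAq : 0 ≤ B ^ q - A ^ q :=
    sub_nonneg.2 (Real.rpow_le_rpow hA.le hAB hq0.le)
  have hE1 : B ^ q - A ^ q ≤ (2:ℝ) ^ (2-p) * (B - A) ^ q := by
    have hsub : B ^ q ≤ (B - A) ^ q + A ^ q := by
      have := sub_rpow_le hq0.le hq1.le (by linarith : (0:ℝ) ≤ B - A) hA.le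
      simpa using this
    have h0 : (0:ℝ) ≤ (B - A) ^ q := Real.rpow_nonneg (by linarith) _
    nlinarith
  -- endpoint 2 : A^q + B^q ≤ 2^(2-p) (A+B)^q
  have hE2 : A ^ q + B ^ q ≤ (2:ℝ) ^ (2-p) * (A + B) ^ q := by
    have h := conc.2 (Set.mem_Ici.2 hA.le) (Set.mem_Ici.2 hB.le)
      (by norm_num : (0:ℝ) ≤ 1/2) (by norm_num : (0:ℝ) ≤ 1/2) (by norm_num)
    simp only [smul_eq_mul] at h
    have hhalf : (1/2 * A + 1/2 * B) = (A + B) / 2 := by ring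
    rw [hhalf, Real.div_rpow (by linarith) (by norm_num)] at h
    have h2q : ((2:ℝ)) ^ (2 - p) = 2 / (2:ℝ) ^ q := by
      rw [show (2:ℝ) - p = 1 - q by rw [hqdef]; ring, Real.rpow_sub (by norm_num), Real.rpow_one]
    rw [h2q]
    have h2qpos : (0:ℝ) < (2:ℝ) ^ q := Real.rpow_pos_of_pos (by norm_num) _
    rw [div_mul_eq_mul_div, le_div_iff₀ h2qpos]
    rw [le_div_iff₀ h2qpos] at h
    calc (A ^ q + B ^ q) * 2 ^ q = 2 * ((1/2 * A ^ q + 1/2 * B ^ q) * 2 ^ q) := by ring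
      _ ≤ 2 * (A + B) ^ q := by linarith
  -- squared endpoints
  have hL1 : (B ^ q - A ^ q) ^ 2 ≤ (2:ℝ) ^ (2-p) * (2:ℝ) ^ (2-p) * D₁ ^ q := by
    have := pow_le_pow_left₀ hBAq hE1 2
    calc (B ^ q - A ^ q) ^ 2 ≤ ((2:ℝ) ^ (2-p) * (B - A) ^ q) ^ 2 := this
      _ = (2:ℝ) ^ (2-p) * (2:ℝ) ^ (2-p) * ((B - A) ^ q) ^ 2 := by ring
      _ = (2:ℝ) ^ (2-p) * (2:ℝ) ^ (2-p) * D₁ ^ q := by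
          rw [hD₁def, sq_rpow (by linarith : (0:ℝ) ≤ B - A)]
  have hL2 : (B ^ q + A ^ q) ^ 2 ≤ (2:ℝ) ^ (2-p) * (2:ℝ) ^ (2-p) * D₂ ^ q := by
    have hnn : 0 ≤ B ^ q + A ^ q := by positivity
    have := pow_le_pow_left₀ hnn (by linarith [hE2] : B ^ q + A ^ q ≤ (2:ℝ) ^ (2-p) * (A + B) ^ q) 2
    calc (B ^ q + A ^ q) ^ 2 ≤ ((2:ℝ) ^ (2-p) * (A + B) ^ q) ^ 2 := this
      _ = (2:ℝ) ^ (2-p) * (2:ℝ) ^ (2-p) * ((A + B) ^ q) ^ 2 := by ring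
      _ = (2:ℝ) ^ (2-p) * (2:ℝ) ^ (2-p) * D₂ ^ q := by
          rw [hD₂def, sq_rpow (by linarith : (0:ℝ) ≤ A + B)]
  -- cross term identity
  have hAq : A ^ (p-2) * A = A ^ q := by
    rw [hqdef, ← Real.rpow_add_one hA.ne' (p-2)]; ring_nf
  have hBq : B ^ (p-2) * B = B ^ q := by
    rw [hqdef, ← Real.rpow_add_one hB.ne' (p-2)]; ring_nf
  have hcross : 2 * (B ^ (p-2) * A ^ (p-2)) * t = 2 * (A ^ q * B ^ q) * (1 - 2 * lam) +
      (B ^ (p-2) * A ^ (p-2)) * (2 * t - 2 * A * B * (1 - 2 * lam)) := by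
    have h : B ^ (p-2) * A ^ (p-2) * (2 * A * B) = 2 * (A ^ q * B ^ q) := by
      calc B ^ (p-2) * A ^ (p-2) * (2 * A * B) = 2 * ((A ^ (p-2) * A) * (B ^ (p-2) * B)) := by ring
        _ = 2 * (A ^ q * B ^ q) := by rw [hAq, hBq]
    linear_combination (1 - 2 * lam) * h
  have htD : 2 * t - 2 * A * B * (1 - 2 * lam) = 0 := by
    have h := hDcomb
    rw [hDdef, hD₁def, hD₂def] at h
    linear_combination h
  rw [htD, mul_zero, add_zero] at hcross
  -- assemble
  have hId : B ^ q * B ^ q + A ^ q * A ^ q - 2 * (B ^ (p-2) * A ^ (p-2)) * t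
      = (1 - lam) * (B ^ q - A ^ q) ^ 2 + lam * (B ^ q + A ^ q) ^ 2 := by
    rw [hcross]; ring
  calc B ^ (p-1) * B ^ (p-1) + A ^ (p-1) * A ^ (p-1) - 2 * (B ^ (p-2) * A ^ (p-2)) * t
      = (1 - lam) * (B ^ q - A ^ q) ^ 2 + lam * (B ^ q + A ^ q) ^ 2 := hId
    _ ≤ (1 - lam) * ((2:ℝ) ^ (2-p) * (2:ℝ) ^ (2-p) * D₁ ^ q)
        + lam * ((2:ℝ) ^ (2-p) * (2:ℝ) ^ (2-p) * D₂ ^ q) :=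
        add_le_add (mul_le_mul_of_nonneg_left hL1 (by linarith))
          (mul_le_mul_of_nonneg_left hL2 hlam0)
    _ = (2:ℝ) ^ (2-p) * (2:ℝ) ^ (2-p) * ((1 - lam) * D₁ ^ q + lam * D₂ ^ q) := by ring
    _ ≤ (2:ℝ) ^ (2-p) * (2:ℝ) ^ (2-p) * D ^ q := mul_le_mul_of_nonneg_left hconc hK.le

private lemma norm_smul_rpow {p : ℝ} (x : E) (hx : x ≠ 0) :
    ‖‖x‖ ^ (p - 2) • x‖ = ‖x‖ ^ (p - 1) := by
  have hxp : 0 < ‖x‖ := norm_pos_iff.2 hx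
  rw [norm_smul, Real.norm_of_nonneg (Real.rpow_nonneg (norm_nonneg x) _),
    ← Real.rpow_add_one hxp.ne' (p - 2)]
  ring_nf

private lemma ptwise_aux {p : ℝ} (hp1 : 1 < p) (hp2 : p ≤ 2) (a b : E) (hab : ‖a‖ ≤ ‖b‖) :
    ‖‖b‖ ^ (p-2) • b - ‖a‖ ^ (p-2) • a‖ ≤ (2:ℝ) ^ (2-p) * ‖b - a‖ ^ (p-1) := by
  rcases eq_or_lt_of_le hp2 with rfl | hp2'
  · norm_num
  by_cases ha : a = 0
  · subst ha
    by_cases hb : b = 0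
    · subst hb
      simp only [smul_zero, sub_zero, norm_zero]
      positivity
    · simp only [norm_zero, smul_zero, sub_zero]
      rw [norm_smul_rpow b hb]
      have h1 : (1:ℝ) ≤ (2:ℝ) ^ (2 - p) := by
        calc (1:ℝ) = (2:ℝ) ^ (0:ℝ) := (Real.rpow_zero 2).symm
        _ ≤ (2:ℝ) ^ (2 - p) := Real.rpow_le_rpow_of_exponent_le one_le_two (by linarith)
      nlinarith [Real.rpow_nonneg (norm_nonneg b) (p-1)]
  · have hA : 0 < ‖a‖ := norm_pos_iff.2 ha
    have hb : b ≠ 0 := by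
      intro h; rw [h, norm_zero] at hab; exact absurd hab (not_le.2 hA)
    have hB : 0 < ‖b‖ := norm_pos_iff.2 hb
    -- reduce to squares
    rw [← pow_le_pow_iff_left₀ (norm_nonneg _) (by positivity) (two_ne_zero)]
    have h1 : ‖‖b‖ ^ (p-2) • b - ‖a‖ ^ (p-2) • a‖ ^ 2
        = ‖b‖ ^ (p-1) * ‖b‖ ^ (p-1) + ‖a‖ ^ (p-1) * ‖a‖ ^ (p-1)
          - 2 * (‖b‖ ^ (p-2) * ‖a‖ ^ (p-2)) * ⟪b, a⟫ := by
      rw [norm_sub_sq_real, real_inner_smul_left, real_inner_smul_right,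
        norm_smul_rpow b hb, norm_smul_rpow a ha]
      ring
    have hD : ‖b - a‖ ^ 2 = ‖b‖ ^ 2 - 2 * ⟪b, a⟫ + ‖a‖ ^ 2 := norm_sub_sq_real b a
    have hD1 : (‖b‖ - ‖a‖) ^ 2 ≤ ‖b‖ ^ 2 - 2 * ⟪b, a⟫ + ‖a‖ ^ 2 := by
      rw [← hD]
      have h := abs_norm_sub_norm_le b a
      calc (‖b‖ - ‖a‖) ^ 2 = |‖b‖ - ‖a‖| ^ 2 := (sq_abs _).symm
        _ ≤ ‖b - a‖ ^ 2 := pow_le_pow_left₀ (abs_nonneg _) h 2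
    have hD2 : ‖b‖ ^ 2 - 2 * ⟪b, a⟫ + ‖a‖ ^ 2 ≤ (‖a‖ + ‖b‖) ^ 2 := by
      rw [← hD]
      have h : ‖b - a‖ ≤ ‖b‖ + ‖a‖ := norm_sub_le b a
      calc ‖b - a‖ ^ 2 ≤ (‖b‖ + ‖a‖) ^ 2 := pow_le_pow_left₀ (norm_nonneg _) h 2
        _ = (‖a‖ + ‖b‖) ^ 2 := by ring
    have key := scalar_key hp1 hp2' hA hab hD1 hD2
    have h2 : ((2:ℝ) ^ (2-p) * ‖b - a‖ ^ (p-1)) ^ 2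
        = (2:ℝ) ^ (2-p) * (2:ℝ) ^ (2-p) * (‖b‖ ^ 2 - 2 * ⟪b, a⟫ + ‖a‖ ^ 2) ^ (p-1) := by
      rw [← hD]
      rw [mul_pow, ← sq_rpow (norm_nonneg (b-a))]
      ring
    rw [h1, h2]
    exact key

private lemma ptwise {p : ℝ} (hp1 : 1 < p) (hp2 : p ≤ 2) (a b : E) :
    ‖‖b‖ ^ (p-2) • b - ‖a‖ ^ (p-2) • a‖ ≤ (2:ℝ) ^ (2-p) * ‖b - a‖ ^ (p-1) := by
  rcases le_total ‖a‖ ‖b‖ with h | h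
  · exact ptwise_aux hp1 hp2 a b h
  · have := ptwise_aux hp1 hp2 b a h
    rwa [norm_sub_rev, norm_sub_rev a b] at this

end Aux

/-- Flux deviation estimate for `1 < p ≤ 2`:
`‖ |g|^{p-2} g - |f|^{p-2} f ‖_{p'} ≤ 2^{2-p} ‖g - f‖_p^{p-1}` with `p' = p/(p-1)`. -/
theorem flux_deviation_p_le_two
    (p : ℝ) (hp1 : 1 < p) (hp2 : p ≤ 2)
    (N : ℕ) (hN : 1 ≤ N)
    {Ω : Type*} [MeasurableSpace Ω] (μ : Measure Ω)
    (f g : Ω → EuclideanSpace ℝ (Fin N))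
    (hfm : Measurable f) (hgm : Measurable g)
    (hfp : ∫⁻ x, ENNReal.ofReal (‖f x‖ ^ p) ∂μ < ⊤)
    (hgp : ∫⁻ x, ENNReal.ofReal (‖g x‖ ^ p) ∂μ < ⊤) :
    (∫ x, ‖‖g x‖ ^ (p - 2) • g x - ‖f x‖ ^ (p - 2) • f x‖ ^ (p / (p - 1)) ∂μ)
        ^ (1 / (p / (p - 1)))
      ≤ (2 : ℝ) ^ (2 - p) * (∫ x, ‖g x - f x‖ ^ p ∂μ) ^ ((p - 1) / p) := by
  have hp0 : 0 < p := by linarith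
  have hpm1 : 0 < p - 1 := by linarith
  have hp' : 0 < p / (p - 1) := by positivity
  have hpq : (p - 1) * (p / (p - 1)) = p := by field_simp
  -- pointwise inequality raised to the power p'
  have hpt : ∀ x, ‖‖g x‖ ^ (p - 2) • g x - ‖f x‖ ^ (p - 2) • f x‖ ^ (p / (p - 1))
      ≤ (2:ℝ) ^ ((2 - p) * (p / (p - 1))) * ‖g x - f x‖ ^ p := by
    intro x
    have h := ptwise hp1 hp2 (f x) (g x)
    have h2 := Real.rpow_le_rpow (norm_nonneg _) h hp'.le
    rwa [Real.mul_rpow (by positivity) (Real.rpow_nonneg (norm_nonneg _) _),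
      ← Real.rpow_mul (by norm_num : (0:ℝ) ≤ 2),
      ← Real.rpow_mul (norm_nonneg _), hpq] at h2
  -- integrability
  have hcont : Continuous fun y : ℝ => y ^ p := continuous_id.rpow_const fun y => Or.inr hp0.le
  have hfi : Integrable (fun x => ‖f x‖ ^ p) μ :=
    ⟨(hcont.measurable.comp hfm.norm).aestronglyMeasurable,
      (hasFiniteIntegral_iff_ofReal
        (ae_of_all _ fun x => Real.rpow_nonneg (norm_nonneg _) _)).2 hfp⟩
  have hgi : Integrable (fun x => ‖g x‖ ^ p) μ :=
    ⟨(hcont.measurable.comp hgm.norm).aestronglyMeasurable,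
      (hasFiniteIntegral_iff_ofReal
        (ae_of_all _ fun x => Real.rpow_nonneg (norm_nonneg _) _)).2 hgp⟩
  have hsub_meas : Measurable fun x => ‖g x - f x‖ ^ p :=
    hcont.measurable.comp (hgm.sub hfm).norm
  have hint : Integrable (fun x => ‖g x - f x‖ ^ p) μ := by
    refine Integrable.mono ((hgi.add hfi).const_mul ((2:ℝ) ^ (p - 1)))
      hsub_meas.aestronglyMeasurable (ae_of_all _ fun x => ?_)
    simp only [Pi.add_apply]
    rw [Real.norm_of_nonneg (Real.rpow_nonneg (norm_nonneg _) _),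
      Real.norm_of_nonneg (mul_nonneg (Real.rpow_nonneg (by norm_num : (0:ℝ) ≤ 2) _)
        (add_nonneg (Real.rpow_nonneg (norm_nonneg _) _) (Real.rpow_nonneg (norm_nonneg _) _)))]
    calc ‖g x - f x‖ ^ p ≤ (‖g x‖ + ‖f x‖) ^ p :=
          Real.rpow_le_rpow (norm_nonneg _) (norm_sub_le _ _) hp0.le
      _ ≤ 2 ^ (p - 1) * (‖g x‖ ^ p + ‖f x‖ ^ p) :=
          add_rpow_le2 hp1.le (norm_nonneg _) (norm_nonneg _)
  have hintc : Integrable (fun x => (2:ℝ) ^ ((2 - p) * (p / (p - 1))) * ‖g x - f x‖ ^ p) μ :=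
    hint.const_mul _
  have hmono := integral_mono_of_nonneg
    (ae_of_all _ fun x => Real.rpow_nonneg (norm_nonneg _) _) hintc (ae_of_all _ hpt)
  rw [integral_const_mul] at hmono
  have hI0 : 0 ≤ ∫ x, ‖g x - f x‖ ^ p ∂μ :=
    integral_nonneg fun x => Real.rpow_nonneg (norm_nonneg _) _
  have hJ0 : 0 ≤ ∫ x, ‖‖g x‖ ^ (p - 2) • g x - ‖f x‖ ^ (p - 2) • f x‖ ^ (p / (p - 1)) ∂μ :=
    integral_nonneg fun x => Real.rpow_nonneg (norm_nonneg _) _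
  have h3 := Real.rpow_le_rpow hJ0 hmono (by positivity : (0:ℝ) ≤ 1 / (p / (p - 1)))
  refine h3.trans (le_of_eq ?_)
  have he : (2 - p) * (p / (p - 1)) * (1 / (p / (p - 1))) = 2 - p := by field_simp
  rw [Real.mul_rpow (by positivity) hI0, ← Real.rpow_mul (by norm_num : (0:ℝ) ≤ 2), he,
    one_div_div]
end

section
/- Let 1 < p ≤ 2 and let f, g be p-integrable vector fields on a measure space, not both vanishing μ-almost everywhere. Then (p − 1) · 2^{(p−2)/p} · (‖f‖_p^p + ‖g‖_p^p)^{(p−2)/p} · ‖g − f‖_p ≤ ‖|g|^{p−2} g − |f|^{p−2} f‖_{p'}. -/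
/-!
Write `Φ(v) = |v|^{p-2} v`. For `1 < p < 2`, testing `Φ(b) - Φ(a)` against `b - a` and using the
concavity of `s ↦ s^{p-1}` gives `(p-1) max(|a|,|b|)^{p-2} |b-a|² ≤ ⟪Φ(b) - Φ(a), b - a⟫`, hence
pointwise `(p-1) (|a|^p + |b|^p)^{(p-2)/p} |b-a| ≤ |Φ(b) - Φ(a)|`. With `U = |f|^p + |g|^p` write
`|g-f|^p = (U^{(p-2)/p} |g-f|)^p · U^{2-p}`; Hölder's inequality with exponents `1/(p-1)` and
`1/(2-p)` turns the pointwise bound into the integral one. The factor `2^{(p-2)/p} ≤ 1` is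
discarded, and for `p = 2` the map `Φ` is the identity.
-/

open MeasureTheory Real
open scoped RealInnerProductSpace

theorem mul_rpow_sub_one_mul_sub_le_rpow_sub_rpow {r s t : ℝ} (hr0 : 0 ≤ r) (hr1 : r ≤ 1)
    (hs : 0 ≤ s) (hst : s ≤ t) : r * t ^ (r - 1) * (t - s) ≤ t ^ r - s ^ r := by
  rcases (hs.trans hst).eq_or_lt with rfl | ht
  · simp [le_antisymm hst hs]
  have bernoulli := rpow_one_add_le_one_add_mul_self (s := s / t - 1) (by
    linarith [div_nonneg hs ht.le]) hr0 hr1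
  rw [add_sub_cancel, div_rpow hs ht.le, div_le_iff₀ (rpow_pos_of_pos ht r)] at bernoulli
  have htr : t ^ r = t ^ (r - 1) * t := by rw [← rpow_add_one ht.ne', sub_add_cancel]
  have hts : (s / t - 1) * t = s - t := by field_simp
  calc r * t ^ (r - 1) * (t - s) = t ^ r - (1 + r * (s / t - 1)) * t ^ r := by
        rw [htr]; linear_combination (r * t ^ (r - 1)) * hts
    _ ≤ t ^ r - s ^ r := by linarith

theorem mul_rpow_sub_one_mul_add_le_rpow_add_rpow {r s t : ℝ} (hr1 : r ≤ 1)
    (hs : 0 ≤ s) (hst : s ≤ t) : r * t ^ (r - 1) * (s + t) ≤ s ^ r + t ^ r := by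
  rcases (hs.trans hst).eq_or_lt with rfl | ht
  · simp only [le_antisymm hst hs, add_zero, mul_zero]
    positivity
  have htr : t ^ (r - 1) * t = t ^ r := by rw [← rpow_add_one ht.ne', sub_add_cancel]
  have hs_term : t ^ (r - 1) * s ≤ s ^ r := by
    rcases hs.eq_or_lt with rfl | hs
    · simp [rpow_nonneg]
    calc t ^ (r - 1) * s ≤ s ^ (r - 1) * s :=
          mul_le_mul_of_nonneg_right (rpow_le_rpow_of_nonpos hs hst (by linarith)) hs.le
      _ = s ^ r := by rw [← rpow_add_one hs.ne', sub_add_cancel]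
  have h0 : 0 ≤ t ^ (r - 1) * s := by positivity
  nlinarith [rpow_nonneg ht.le r]

theorem rpow_add_rpow_rpow_div_le_max_rpow {x y p e : ℝ} (hx : 0 ≤ x) (hy : 0 ≤ y) (hp : 0 < p)
    (he : e ≤ 0) : (x ^ p + y ^ p) ^ (e / p) ≤ max x y ^ e := by
  have hmax : max x y ^ e = (max x y ^ p) ^ (e / p) := by
    rw [← rpow_mul (le_max_of_le_left hx), mul_div_cancel₀ e hp.ne']
  rw [hmax]
  rcases (le_max_of_le_left hx : 0 ≤ max x y).eq_or_lt with hm | hm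
  · obtain ⟨rfl, rfl⟩ : x = 0 ∧ y = 0 := by
      constructor <;> linarith [le_max_left x y, le_max_right x y]
    simp [zero_rpow hp.ne']
  refine rpow_le_rpow_of_nonpos (rpow_pos_of_pos hm p) ?_ (div_nonpos_of_nonpos_of_nonneg he hp.le)
  rcases max_choice x y with h | h <;> rw [h]
  · exact le_add_of_nonneg_right (rpow_nonneg hy p)
  · exact le_add_of_nonneg_left (rpow_nonneg hx p)

section Flux

variable {E : Type*}

section Normed

variable [SeminormedAddCommGroup E] [NormedSpace ℝ E]

noncomputable def flux (p : ℝ) (v : E) : E := ‖v‖ ^ (p - 2) • v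

theorem norm_flux {p : ℝ} (hp : p ≠ 1) (v : E) : ‖flux p v‖ = ‖v‖ ^ (p - 1) := by
  rw [flux, norm_smul, norm_of_nonneg (by positivity),
    ← rpow_add_one' (norm_nonneg v) (by contrapose! hp; linarith)]
  ring_nf

end Normed

variable [NormedAddCommGroup E] [InnerProductSpace ℝ E]

theorem mul_rpow_mul_norm_sub_sq_le_inner_flux_sub_flux {p : ℝ} (hp1 : 1 < p) (hp2 : p ≤ 2)
    {a b : E} (hab : ‖a‖ ≤ ‖b‖) :
    (p - 1) * ‖b‖ ^ (p - 2) * ‖b - a‖ ^ 2 ≤ ⟪flux p b - flux p a, b - a⟫ := by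
  have hpow (x : ℝ) (hx : 0 ≤ x) : x ^ (p - 1) = x ^ (p - 2) * x := by
    rw [← rpow_add_one' hx (by contrapose! hp1; linarith)]
    ring_nf
  have hsub := mul_rpow_sub_one_mul_sub_le_rpow_sub_rpow (r := p - 1) (by linarith)
    (by linarith) (norm_nonneg a) hab
  have hadd := mul_rpow_sub_one_mul_add_le_rpow_add_rpow (r := p - 1) (by linarith)
    (norm_nonneg a) hab
  rw [sub_sub, one_add_one_eq_two, hpow _ (norm_nonneg a), hpow _ (norm_nonneg b)]
    at hsub hadd
  have hinner : |⟪a, b⟫| ≤ ‖a‖ * ‖b‖ := abs_real_inner_le_norm a b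
  rw [abs_le] at hinner
  simp only [flux, inner_sub_left, inner_sub_right, real_inner_smul_left,
    real_inner_self_eq_norm_sq, real_inner_comm a b, norm_sub_sq_real]
  -- The claim is affine in `⟪a, b⟫ ∈ [-‖a‖ ‖b‖, ‖a‖ ‖b‖]`; at the two endpoints it is `h₁`, `h₂`.
  have hs := norm_nonneg a
  have h₁ := mul_le_mul_of_nonneg_right hsub (sub_nonneg.2 hab)
  have h₂ := mul_le_mul_of_nonneg_right hadd (add_nonneg hs (hs.trans hab))
  rcases le_total 0 (‖a‖ ^ (p - 2) + ‖b‖ ^ (p - 2) - 2 * (p - 1) * ‖b‖ ^ (p - 2)) with hβ | hβ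
  · linarith [mul_le_mul_of_nonneg_left hinner.2 hβ]
  · linarith [mul_le_mul_of_nonpos_left hinner.1 hβ]

theorem mul_max_rpow_mul_norm_sub_le_norm_flux_sub_flux {p : ℝ} (hp1 : 1 < p) (hp2 : p ≤ 2)
    (a b : E) : (p - 1) * max ‖a‖ ‖b‖ ^ (p - 2) * ‖b - a‖ ≤ ‖flux p b - flux p a‖ := by
  have hinner : (p - 1) * max ‖a‖ ‖b‖ ^ (p - 2) * ‖b - a‖ ^ 2 ≤ ⟪flux p b - flux p a, b - a⟫ := by
    rcases le_total ‖a‖ ‖b‖ with h | h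
    · rw [max_eq_right h]
      exact mul_rpow_mul_norm_sub_sq_le_inner_flux_sub_flux hp1 hp2 h
    · rw [max_eq_left h]
      have h' := mul_rpow_mul_norm_sub_sq_le_inner_flux_sub_flux hp1 hp2 h
      rwa [norm_sub_rev, ← inner_neg_neg, neg_sub, neg_sub] at h'
  rcases (norm_nonneg (b - a)).eq_or_lt with h0 | hpos
  · rw [← h0, mul_zero]
    exact norm_nonneg _
  refine le_of_mul_le_mul_right ?_ hpos
  calc (p - 1) * max ‖a‖ ‖b‖ ^ (p - 2) * ‖b - a‖ * ‖b - a‖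
      = (p - 1) * max ‖a‖ ‖b‖ ^ (p - 2) * ‖b - a‖ ^ 2 := by ring
    _ ≤ ⟪flux p b - flux p a, b - a⟫ := hinner
    _ ≤ ‖flux p b - flux p a‖ * ‖b - a‖ := real_inner_le_norm _ _

theorem mul_rpow_mul_norm_sub_le_norm_flux_sub_flux {p : ℝ} (hp1 : 1 < p) (hp2 : p ≤ 2)
    (a b : E) :
    (p - 1) * 2 ^ ((p - 2) / p) * (‖a‖ ^ p + ‖b‖ ^ p) ^ ((p - 2) / p) * ‖b - a‖
      ≤ ‖flux p b - flux p a‖ := by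
  have he : (p - 2) / p ≤ 0 := div_nonpos_of_nonpos_of_nonneg (by linarith) (by linarith)
  calc (p - 1) * 2 ^ ((p - 2) / p) * (‖a‖ ^ p + ‖b‖ ^ p) ^ ((p - 2) / p) * ‖b - a‖
      ≤ (p - 1) * 1 * max ‖a‖ ‖b‖ ^ (p - 2) * ‖b - a‖ := by
        gcongr
        · exact rpow_le_one_of_one_le_of_nonpos one_le_two he
        · exact rpow_add_rpow_rpow_div_le_max_rpow (norm_nonneg a) (norm_nonneg b)
            (by linarith) (by linarith)
    _ ≤ ‖flux p b - flux p a‖ := by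
        rw [mul_one]
        exact mul_max_rpow_mul_norm_sub_le_norm_flux_sub_flux hp1 hp2 a b

end Flux

section Integral

variable {Ω : Type*} [MeasurableSpace Ω] {μ : Measure Ω}

theorem memLp_ofReal_iff_integrable_norm_rpow {F : Type*} [NormedAddCommGroup F] {f : Ω → F}
    (hf : AEStronglyMeasurable f μ) {p : ℝ} (hp : 0 < p) :
    MemLp f (ENNReal.ofReal p) μ ↔ Integrable (fun x => ‖f x‖ ^ p) μ := by
  rw [← integrable_norm_rpow_iff hf (ENNReal.ofReal_pos.2 hp).ne' ENNReal.ofReal_ne_top,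
    ENNReal.toReal_ofReal hp.le]

theorem integrable_norm_rpow_of_lintegral_lt_top {F : Type*} [NormedAddCommGroup F] {f : Ω → F}
    (hf : AEStronglyMeasurable f μ) {p : ℝ}
    (h : ∫⁻ x, ENNReal.ofReal (‖f x‖ ^ p) ∂μ < ⊤) : Integrable (fun x => ‖f x‖ ^ p) μ :=
  ⟨(hf.norm.aemeasurable.pow_const p).aestronglyMeasurable,
    (hasFiniteIntegral_iff_ofReal (ae_of_all _ fun _ => rpow_nonneg (norm_nonneg _) p)).2 h⟩

theorem MeasureTheory.MemLp.flux {F : Type*} [NormedAddCommGroup F] [NormedSpace ℝ F]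
    {f : Ω → F} {p : ℝ} (hp : 1 < p) (hf : MemLp f (ENNReal.ofReal p) μ) :
    MemLp (fun x => flux p (f x)) (ENNReal.ofReal (p / (p - 1))) μ := by
  have hp1 : 0 < p - 1 := by linarith
  have h := (memLp_norm_rpow_iff hf.1 (q := ENNReal.ofReal (p - 1))
    (ENNReal.ofReal_pos.2 hp1).ne' ENNReal.ofReal_ne_top).2 hf
  rw [ENNReal.toReal_ofReal hp1.le, ← ENNReal.ofReal_div_of_pos hp1] at h
  refine h.congr_norm ((hf.1.norm.aemeasurable.pow_const _).aestronglyMeasurable.smul hf.1)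
    (ae_of_all _ fun x => ?_)
  rw [norm_flux hp.ne', norm_of_nonneg (rpow_nonneg (norm_nonneg _) _)]

theorem integral_rpow_mul_rpow_le {a b : ℝ} (ha : 0 < a) (hb : 0 < b) (hab : a + b = 1)
    {A B : Ω → ℝ} (hA0 : 0 ≤ A) (hB0 : 0 ≤ B) (hA : Integrable A μ) (hB : Integrable B μ) :
    ∫ x, A x ^ a * B x ^ b ∂μ ≤ (∫ x, A x ∂μ) ^ a * (∫ x, B x ∂μ) ^ b := by
  have memLp_rpow {C : Ω → ℝ} (hC0 : 0 ≤ C) (hC : Integrable C μ) {c : ℝ} (hc : 0 < c) :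
      MemLp (fun x => C x ^ c) (ENNReal.ofReal c⁻¹) μ := by
    have h := (memLp_one_iff_integrable.2 hC).norm_rpow_div (ENNReal.ofReal c)
    rw [ENNReal.toReal_ofReal hc.le, one_div, ← ENNReal.ofReal_inv_of_pos hc] at h
    simpa only [norm_of_nonneg (hC0 _)] using h
  have holder := integral_mul_le_Lp_mul_Lq_of_nonneg (HolderConjugate.inv_inv ha hb hab)
    (ae_of_all _ fun x => rpow_nonneg (hA0 x) a) (ae_of_all _ fun x => rpow_nonneg (hB0 x) b)
    (memLp_rpow hA0 hA ha) (memLp_rpow hB0 hB hb)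
  simpa only [← rpow_mul (hA0 _), ← rpow_mul (hB0 _), mul_inv_cancel₀ ha.ne',
    mul_inv_cancel₀ hb.ne', rpow_one, one_div, inv_inv] using holder

theorem mul_integral_rpow_le_of_weighted_le {p c : ℝ} (hp1 : 1 < p) (hp2 : p < 2) (hc : 0 ≤ c)
    {U D H : Ω → ℝ} (hU0 : 0 ≤ U) (hD0 : 0 ≤ D) (hU : Integrable U μ) (hD : AEMeasurable D μ)
    (hH : Integrable (fun x => H x ^ (p / (p - 1))) μ) (hDU : ∀ x, U x = 0 → D x = 0)
    (hDH : ∀ x, c * U x ^ ((p - 2) / p) * D x ≤ H x) :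
    c ^ p * ∫ x, D x ^ p ∂μ
      ≤ (∫ x, H x ^ (p / (p - 1)) ∂μ) ^ (p - 1) * (∫ x, U x ∂μ) ^ (2 - p) := by
  set A : Ω → ℝ := fun x => (c * U x ^ ((p - 2) / p) * D x) ^ (p / (p - 1))
  have hweighted0 (x : Ω) : 0 ≤ c * U x ^ ((p - 2) / p) * D x :=
    mul_nonneg (mul_nonneg hc (rpow_nonneg (hU0 x) _)) (hD0 x)
  have hq : 0 < p / (p - 1) := div_pos (by linarith) (by linarith)
  have hA0 : 0 ≤ A := fun x => rpow_nonneg (hweighted0 x) _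
  have hA_le (x : Ω) : A x ≤ H x ^ (p / (p - 1)) := rpow_le_rpow (hweighted0 x) (hDH x) hq.le
  have hA : Integrable A μ := by
    refine hH.mono' ?_ (ae_of_all _ fun x => ?_)
    · exact ((hU.aemeasurable.pow_const _).const_mul c |>.mul hD |>.pow_const _).aestronglyMeasurable
    · rw [norm_of_nonneg (hA0 x)]
      exact hA_le x
  have hsplit (x : Ω) : c ^ p * D x ^ p = A x ^ (p - 1) * U x ^ (2 - p) := by
    rcases (hU0 x).eq_or_lt with hx | hx
    · simp [A, ← hx, hDU x hx.symm, zero_rpow (by linarith : p ≠ 0),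
        zero_rpow (by linarith : p - 1 ≠ 0), zero_rpow hq.ne']
    have hweight : (U x ^ ((p - 2) / p)) ^ p = U x ^ (p - 2) := by
      rw [← rpow_mul hx.le, div_mul_cancel₀ _ (by linarith : p ≠ 0)]
    have hcancel : U x ^ (p - 2) * U x ^ (2 - p) = 1 := by
      rw [← rpow_add hx, sub_add_sub_cancel', sub_self, rpow_zero]
    rw [← rpow_mul (hweighted0 x), div_mul_cancel₀ _ (by linarith : p - 1 ≠ 0),
      mul_rpow (mul_nonneg hc (rpow_nonneg hx.le _)) (hD0 x), mul_rpow hc (rpow_nonneg hx.le _),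
      hweight]
    linear_combination (-(c ^ p * D x ^ p)) * hcancel
  calc c ^ p * ∫ x, D x ^ p ∂μ = ∫ x, A x ^ (p - 1) * U x ^ (2 - p) ∂μ := by
        rw [← integral_const_mul]; simp only [hsplit]
    _ ≤ (∫ x, A x ∂μ) ^ (p - 1) * (∫ x, U x ∂μ) ^ (2 - p) :=
        integral_rpow_mul_rpow_le (by linarith) (by linarith) (by ring)
          hA0 hU0 hA hU
    _ ≤ (∫ x, H x ^ (p / (p - 1)) ∂μ) ^ (p - 1) * (∫ x, U x ∂μ) ^ (2 - p) :=
        mul_le_mul_of_nonneg_right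
          (rpow_le_rpow (integral_nonneg hA0) (integral_mono hA hH hA_le) (by linarith))
          (rpow_nonneg (integral_nonneg hU0) _)

theorem mul_integral_rpow_mul_Lp_le_Lq_of_weighted_le {p c : ℝ} (hp1 : 1 < p) (hp2 : p < 2)
    (hc : 0 ≤ c) {U D H : Ω → ℝ} (hU0 : 0 ≤ U) (hD0 : 0 ≤ D) (hU : Integrable U μ)
    (hD : AEMeasurable D μ) (hH : Integrable (fun x => H x ^ (p / (p - 1))) μ)
    (hDU : ∀ x, U x = 0 → D x = 0) (hDH : ∀ x, c * U x ^ ((p - 2) / p) * D x ≤ H x) :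
    c * (∫ x, U x ∂μ) ^ ((p - 2) / p) * (∫ x, D x ^ p ∂μ) ^ (1 / p)
      ≤ (∫ x, H x ^ (p / (p - 1)) ∂μ) ^ (1 / (p / (p - 1))) := by
  have hH0 (x : Ω) : 0 ≤ H x ^ (p / (p - 1)) :=
    rpow_nonneg ((mul_nonneg (mul_nonneg hc (rpow_nonneg (hU0 x) _)) (hD0 x)).trans (hDH x)) _
  have hT : 0 ≤ ∫ x, U x ∂μ := integral_nonneg hU0
  have hI : 0 ≤ ∫ x, D x ^ p ∂μ := integral_nonneg fun x => rpow_nonneg (hD0 x) p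
  have hJ : 0 ≤ ∫ x, H x ^ (p / (p - 1)) ∂μ := integral_nonneg hH0
  rcases hT.eq_or_lt with hT0 | hTpos
  -- `0 ^ x = 0` for `x ≠ 0`, so here the left side vanishes.
  · rw [← hT0, zero_rpow (div_ne_zero (by linarith) (by linarith)), mul_zero, zero_mul]
    exact rpow_nonneg hJ _
  rw [← rpow_le_rpow_iff (by positivity) (rpow_nonneg hJ _) (by linarith : 0 < p),
    mul_rpow (by positivity) (rpow_nonneg hI _), mul_rpow hc (rpow_nonneg hT _), ← rpow_mul hT,
    ← rpow_mul hI, ← rpow_mul hJ, div_mul_cancel₀ _ (by linarith : p ≠ 0),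
    one_div_mul_cancel (by linarith : p ≠ 0), rpow_one,
    show 1 / (p / (p - 1)) * p = p - 1 by field_simp]
  calc c ^ p * (∫ x, U x ∂μ) ^ (p - 2) * ∫ x, D x ^ p ∂μ
      = (∫ x, U x ∂μ) ^ (p - 2) * (c ^ p * ∫ x, D x ^ p ∂μ) := by ring
    _ ≤ (∫ x, U x ∂μ) ^ (p - 2)
        * ((∫ x, H x ^ (p / (p - 1)) ∂μ) ^ (p - 1) * (∫ x, U x ∂μ) ^ (2 - p)) :=
        mul_le_mul_of_nonneg_left
          (mul_integral_rpow_le_of_weighted_le hp1 hp2 hc hU0 hD0 hU hD hH hDU hDH)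
          (rpow_nonneg hT _)
    _ = (∫ x, H x ^ (p / (p - 1)) ∂μ) ^ (p - 1) := by
        rw [mul_left_comm, ← rpow_add hTpos, sub_add_sub_cancel', sub_self, rpow_zero, mul_one]

end Integral

theorem flux_deviation_inverse_p_le_two_general
    (p : ℝ) (hp1 : 1 < p) (hp2 : p ≤ 2)
    (N : ℕ)
    {Ω : Type*} [MeasurableSpace Ω] (μ : Measure Ω)
    (f g : Ω → EuclideanSpace ℝ (Fin N))
    (hfm : Measurable f) (hgm : Measurable g)
    (hfp : ∫⁻ x, ENNReal.ofReal (‖f x‖ ^ p) ∂μ < ⊤)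
    (hgp : ∫⁻ x, ENNReal.ofReal (‖g x‖ ^ p) ∂μ < ⊤) :
    (p - 1) * (2 : ℝ) ^ ((p - 2) / p)
        * ((∫ x, ‖f x‖ ^ p ∂μ) + ∫ x, ‖g x‖ ^ p ∂μ) ^ ((p - 2) / p)
        * (∫ x, ‖g x - f x‖ ^ p ∂μ) ^ (1 / p)
      ≤ (∫ x, ‖‖g x‖ ^ (p - 2) • g x - ‖f x‖ ^ (p - 2) • f x‖ ^ (p / (p - 1)) ∂μ)
          ^ (1 / (p / (p - 1))) := by
  rcases hp2.eq_or_lt with rfl | hp2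
  · norm_num
  have hp0 : 0 < p := by linarith
  have hfi := integrable_norm_rpow_of_lintegral_lt_top hfm.aestronglyMeasurable hfp
  have hgi := integrable_norm_rpow_of_lintegral_lt_top hgm.aestronglyMeasurable hgp
  have hf := (memLp_ofReal_iff_integrable_norm_rpow hfm.aestronglyMeasurable hp0).2 hfi
  have hg := (memLp_ofReal_iff_integrable_norm_rpow hgm.aestronglyMeasurable hp0).2 hgi
  have hflux := (hg.flux hp1).sub (hf.flux hp1)
  have hvanish (x : Ω) (hx : ‖f x‖ ^ p + ‖g x‖ ^ p = 0) : ‖g x - f x‖ = 0 := by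
    obtain ⟨hf0, hg0⟩ := (add_eq_zero_iff_of_nonneg (by positivity) (by positivity)).1 hx
    rw [rpow_eq_zero (norm_nonneg _) hp0.ne', norm_eq_zero] at hf0 hg0
    rw [hf0, hg0, sub_zero, norm_zero]
  have key := mul_integral_rpow_mul_Lp_le_Lq_of_weighted_le hp1 hp2
    (U := fun x => ‖f x‖ ^ p + ‖g x‖ ^ p) (H := fun x => ‖flux p (g x) - flux p (f x)‖)
    (by positivity : 0 ≤ (p - 1) * (2 : ℝ) ^ ((p - 2) / p)) (fun x => by positivity)
    (fun x => norm_nonneg (g x - f x)) (hfi.add hgi) (by fun_prop)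
    ((memLp_ofReal_iff_integrable_norm_rpow hflux.1 (by positivity)).1 hflux) hvanish
    (fun x => mul_rpow_mul_norm_sub_le_norm_flux_sub_flux hp1 hp2.le (f x) (g x))
  rwa [integral_add hfi hgi] at key

/-- Inverse flux deviation estimate for `1 < p ≤ 2`:
`(p-1) 2^{(p-2)/p} (‖f‖_p^p + ‖g‖_p^p)^{(p-2)/p} ‖g - f‖_p ≤ ‖ |g|^{p-2} g - |f|^{p-2} f ‖_{p'}`. -/
theorem flux_deviation_inverse_p_le_two
    (p : ℝ) (hp1 : 1 < p) (hp2 : p ≤ 2)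
    (N : ℕ) (hN : 1 ≤ N)
    {Ω : Type*} [MeasurableSpace Ω] (μ : Measure Ω)
    (f g : Ω → EuclideanSpace ℝ (Fin N))
    (hfm : Measurable f) (hgm : Measurable g)
    (hfp : ∫⁻ x, ENNReal.ofReal (‖f x‖ ^ p) ∂μ < ⊤)
    (hgp : ∫⁻ x, ENNReal.ofReal (‖g x‖ ^ p) ∂μ < ⊤)
    (hne : ¬(f =ᵐ[μ] 0 ∧ g =ᵐ[μ] 0)) :
    (p - 1) * (2 : ℝ) ^ ((p - 2) / p)
        * ((∫ x, ‖f x‖ ^ p ∂μ) + ∫ x, ‖g x‖ ^ p ∂μ) ^ ((p - 2) / p)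
        * (∫ x, ‖g x - f x‖ ^ p ∂μ) ^ (1 / p)
      ≤ (∫ x, ‖‖g x‖ ^ (p - 2) • g x - ‖f x‖ ^ (p - 2) • f x‖ ^ (p / (p - 1)) ∂μ)
          ^ (1 / (p / (p - 1))) :=
  flux_deviation_inverse_p_le_two_general p hp1 hp2 N μ f g hfm hgm hfp hgp
end

section
/- Let p ≥ 2 and let f, g be p-integrable vector fields on a measure space. Then 2^{2−p} ‖g − f‖_p^{p−1} ≤ ‖|g|^{p−2} g − |f|^{p−2} f‖_{p'}. -/
open MeasureTheory

private lemma rpow_mul_self' {x : ℝ} (hx : 0 ≤ x) {q : ℝ} (hq : 0 < q + 1) :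
    x ^ q * x = x ^ (q + 1) := by
  rcases eq_or_lt_of_le hx with h | h
  · rw [← h, Real.zero_rpow (ne_of_gt hq), mul_zero]
  · rw [Real.rpow_add_one (ne_of_gt h)]

private lemma two_rpow_mean {s t r : ℝ} (hs : 0 ≤ s) (ht : 0 ≤ t) (hr : 1 ≤ r) :
    (s + t) ^ r ≤ 2 ^ (r - 1) * (s ^ r + t ^ r) := by
  have h := NNReal.rpow_add_le_mul_rpow_add_rpow ⟨s, hs⟩ ⟨t, ht⟩ hr
  have h2 := NNReal.coe_le_coe.2 h
  push_cast at h2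
  exact h2

private lemma key_scalar (p : ℝ) (hp : 2 ≤ p) {s t D : ℝ} (hs : 0 ≤ s) (ht : 0 ≤ t)
    (hD : 0 ≤ D) (hDst : D ≤ s + t) :
    2 ^ (2 - p) * D ^ p
      ≤ (s ^ (p - 2) * (s * s - t * t + D * D) + t ^ (p - 2) * (D * D + t * t - s * s)) / 2 := by
  have hq : (0:ℝ) ≤ p - 2 := by linarith
  have hp0 : (0:ℝ) < p := by linarith
  set u := s ^ (p - 2) with hu_def
  set v := t ^ (p - 2) with hv_def
  have hu : 0 ≤ u := Real.rpow_nonneg hs _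
  have hv : 0 ≤ v := Real.rpow_nonneg ht _
  have hc : (0:ℝ) < 2 ^ (2 - p) := Real.rpow_pos_of_pos two_pos _
  set c := (2:ℝ) ^ (2 - p) with hc_def
  have hus : u * s = s ^ (p - 1) := by
    have := rpow_mul_self' hs (q := p - 2) (by linarith)
    simpa [show p - 2 + 1 = p - 1 by ring] using this
  have hvt : v * t = t ^ (p - 1) := by
    have := rpow_mul_self' ht (q := p - 2) (by linarith)
    simpa [show p - 2 + 1 = p - 1 by ring] using this
  set M := s + t with hM_def
  have hM : 0 ≤ M := by positivity
  have hB : 0 ≤ (u - v) * (s * s - t * t) := by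
    rcases le_total s t with h | h
    · have h1 : u ≤ v := Real.rpow_le_rpow hs h hq
      have h2 : s * s ≤ t * t := mul_le_mul h h hs ht
      nlinarith
    · have h1 : v ≤ u := Real.rpow_le_rpow ht h hq
      have h2 : t * t ≤ s * s := mul_le_mul h h ht hs
      nlinarith
  -- endpoint inequality : c * M^p ≤ M * (s^(p-1) + t^(p-1))
  have hend : c * M ^ p ≤ M * (s ^ (p - 1) + t ^ (p - 1)) := by
    rcases eq_or_lt_of_le hM with h0 | h0
    · rw [← h0, Real.zero_rpow (ne_of_gt hp0)]
      simp
    · have hMp : M ^ (p - 1) * M = M ^ p := by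
        have := rpow_mul_self' (le_of_lt h0) (q := p - 1) (by linarith)
        simpa [show p - 1 + 1 = p by ring] using this
      have hconv : M ^ (p - 1) ≤ 2 ^ (p - 2) * (s ^ (p - 1) + t ^ (p - 1)) := by
        have := two_rpow_mean hs ht (r := p - 1) (by linarith)
        simpa [show p - 1 - 1 = p - 2 by ring] using this
      have h2 : c * 2 ^ (p - 2) = 1 := by
        rw [hc_def, ← Real.rpow_add two_pos]
        norm_num
      calc c * M ^ p = c * (M ^ (p - 1) * M) := by rw [hMp]
        _ ≤ c * (2 ^ (p - 2) * (s ^ (p - 1) + t ^ (p - 1)) * M) := by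
            apply mul_le_mul_of_nonneg_left _ (le_of_lt hc)
            exact mul_le_mul_of_nonneg_right hconv (le_of_lt h0)
        _ = M * (s ^ (p - 1) + t ^ (p - 1)) := by
            rw [show c * (2 ^ (p - 2) * (s ^ (p - 1) + t ^ (p - 1)) * M)
              = (c * 2 ^ (p - 2)) * ((s ^ (p - 1) + t ^ (p - 1)) * M) by ring, h2]; ring
  have hend' : c * (M * M) * M ^ (p - 2)
      ≤ (u + v) / 2 * (M * M) + (u - v) * (s * s - t * t) / 2 := by
    have hMMp : (M * M) * M ^ (p - 2) = M ^ p := by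
      rcases eq_or_lt_of_le hM with h0 | h0
      · rw [← h0, Real.zero_rpow (ne_of_gt hp0)]; ring
      · rw [show p = (p - 2) + 1 + 1 by ring, ← rpow_mul_self' (le_of_lt h0) (q := p - 2 + 1) (by linarith),
          ← rpow_mul_self' (le_of_lt h0) (q := p - 2) (by linarith)]
        ring
    have hAB : (u + v) / 2 * (M * M) + (u - v) * (s * s - t * t) / 2
        = M * (s ^ (p - 1) + t ^ (p - 1)) := by
      rw [← hus, ← hvt, hM_def]; ring
    rw [hAB, show c * (M * M) * M ^ (p - 2) = c * ((M * M) * M ^ (p - 2)) by ring, hMMp]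
    exact hend
  -- main
  have hgoal : c * D ^ p ≤ (u + v) / 2 * (D * D) + (u - v) * (s * s - t * t) / 2 := by
    rcases eq_or_lt_of_le hD with h0 | h0
    · rw [← h0, Real.zero_rpow (ne_of_gt hp0)]
      nlinarith
    · have hDp : D ^ p = (D * D) * D ^ (p - 2) := by
        rw [show p = (p - 2) + 1 + 1 by ring, ← rpow_mul_self' (le_of_lt h0) (q := p - 2 + 1) (by linarith),
          ← rpow_mul_self' (le_of_lt h0) (q := p - 2) (by linarith)]
        ring
      have hDM : D ^ (p - 2) ≤ M ^ (p - 2) := Real.rpow_le_rpow hD hDst hq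
      have hDD : D * D ≤ M * M := mul_le_mul hDst hDst hD hM
      have hMq : 0 ≤ M ^ (p - 2) := Real.rpow_nonneg hM _
      have hDDnn : (0:ℝ) ≤ D * D := mul_nonneg hD hD
      have step1 : c * (D * D * D ^ (p - 2)) ≤ c * (D * D) * M ^ (p - 2) := by
        rw [show c * (D * D * D ^ (p - 2)) = (c * (D * D)) * D ^ (p - 2) by ring]
        exact mul_le_mul_of_nonneg_left hDM (mul_nonneg hc.le hDDnn)
      rcases le_total (c * M ^ (p - 2)) ((u + v) / 2) with h1 | h1
      · rw [hDp]
        have step2 : c * (D * D) * M ^ (p - 2) ≤ (u + v) / 2 * (D * D) := by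
          rw [show c * (D * D) * M ^ (p - 2) = (c * M ^ (p - 2)) * (D * D) by ring]
          exact mul_le_mul_of_nonneg_right h1 hDDnn
        linarith
      · rw [hDp]
        have step2 : (c * M ^ (p - 2) - (u + v) / 2) * (D * D)
            ≤ (c * M ^ (p - 2) - (u + v) / 2) * (M * M) :=
          mul_le_mul_of_nonneg_left hDD (by linarith)
        nlinarith [hend']
  calc c * D ^ p ≤ (u + v) / 2 * (D * D) + (u - v) * (s * s - t * t) / 2 := hgoal
    _ = (u * (s * s - t * t + D * D) + v * (D * D + t * t - s * s)) / 2 := by ring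

open RealInnerProductSpace in
private lemma key_vec (p : ℝ) (hp : 2 ≤ p) {E : Type*} [NormedAddCommGroup E]
    [InnerProductSpace ℝ E] (a b : E) :
    2 ^ (2 - p) * ‖b - a‖ ^ (p - 1) ≤ ‖‖b‖ ^ (p - 2) • b - ‖a‖ ^ (p - 2) • a‖ := by
  set s := ‖b‖ with hs_def
  set t := ‖a‖ with ht_def
  set D := ‖b - a‖ with hD_def
  have hs : 0 ≤ s := norm_nonneg _
  have ht : 0 ≤ t := norm_nonneg _
  have hD : 0 ≤ D := norm_nonneg _
  set Φ := s ^ (p - 2) • b - t ^ (p - 2) • a with hPhi_def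
  have hinner : ⟪Φ, b - a⟫
      = (s ^ (p - 2) * (s * s - t * t + D * D) + t ^ (p - 2) * (D * D + t * t - s * s)) / 2 := by
    have h1 : ⟪b, b⟫ = s * s := real_inner_self_eq_norm_mul_norm b
    have h2 : ⟪a, a⟫ = t * t := real_inner_self_eq_norm_mul_norm a
    have h3 : D * D = s * s - 2 * ⟪b, a⟫ + t * t := by
      have := @norm_sub_sq_real E _ _ b a
      nlinarith [this]
    have h4 : ⟪a, b⟫ = ⟪b, a⟫ := real_inner_comm b a
    have hexp : ⟪Φ, b - a⟫ = s ^ (p - 2) * ⟪b,b⟫ - s ^ (p - 2) * ⟪b,a⟫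
        - t ^ (p - 2) * ⟪a,b⟫ + t ^ (p - 2) * ⟪a,a⟫ := by
      simp [hPhi_def, inner_sub_left, inner_sub_right, real_inner_smul_left]
      ring
    rw [hexp, h1, h2, h4]
    linear_combination (-(s ^ (p - 2) + t ^ (p - 2)) / 2) * h3
  have hDst : D ≤ s + t := norm_sub_le b a
  have hscalar := key_scalar p hp hs ht hD hDst
  have hCS : ⟪Φ, b - a⟫ ≤ ‖Φ‖ * D := real_inner_le_norm Φ (b - a)
  rcases eq_or_lt_of_le hD with h0 | h0
  · rw [← h0, Real.zero_rpow (show p - 1 ≠ 0 by intro h; linarith), mul_zero]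
    exact norm_nonneg _
  · have key : 2 ^ (2 - p) * D ^ p ≤ ‖Φ‖ * D := by
      rw [hinner] at hCS; linarith
    have hDp : D ^ p = D ^ (p - 1) * D := by
      rw [rpow_mul_self' hD (q := p - 1) (by linarith), show p - 1 + 1 = p by ring]
    rw [hDp] at key
    have := le_of_mul_le_mul_right (by linarith [key] : (2 ^ (2 - p) * D ^ (p - 1)) * D ≤ ‖Φ‖ * D) h0
    exact this

/-- Inverse flux deviation estimate for `p ≥ 2`:
`2^{2-p} ‖g - f‖_p^{p-1} ≤ ‖ |g|^{p-2} g - |f|^{p-2} f ‖_{p'}`. -/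
theorem flux_deviation_inverse_p_ge_two
    (p : ℝ) (hp : 2 ≤ p)
    (N : ℕ) (hN : 1 ≤ N)
    {Ω : Type*} [MeasurableSpace Ω] (μ : Measure Ω)
    (f g : Ω → EuclideanSpace ℝ (Fin N))
    (hfm : Measurable f) (hgm : Measurable g)
    (hfp : ∫⁻ x, ENNReal.ofReal (‖f x‖ ^ p) ∂μ < ⊤)
    (hgp : ∫⁻ x, ENNReal.ofReal (‖g x‖ ^ p) ∂μ < ⊤) :
    (2 : ℝ) ^ (2 - p) * ((∫ x, ‖g x - f x‖ ^ p ∂μ) ^ (1 / p)) ^ (p - 1)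
      ≤ (∫ x, ‖‖g x‖ ^ (p - 2) • g x - ‖f x‖ ^ (p - 2) • f x‖ ^ (p / (p - 1)) ∂μ)
          ^ (1 / (p / (p - 1))) := by
  have hp1 : (1:ℝ) < p := by linarith
  have hpm1 : (0:ℝ) < p - 1 := by linarith
  have hp0 : (0:ℝ) < p := by linarith
  set p' := p / (p - 1) with hp'_def
  have hp'pos : 0 < p' := by positivity
  have hpp' : (p - 1) * p' = p := by rw [hp'_def]; field_simp
  have hinv : 1 / p * (p - 1) = 1 / p' := by
    rw [hp'_def, one_div_div]; ring
  set Φ := fun x => ‖g x‖ ^ (p - 2) • g x - ‖f x‖ ^ (p - 2) • f x with hΦ_def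
  have hrpm : ∀ {q : ℝ}, 0 ≤ q → Measurable (fun x : ℝ => x ^ q) := fun hq =>
    (Real.continuous_rpow_const hq).measurable
  have hq2 : (0:ℝ) ≤ p - 2 := by linarith
  have hΦm : Measurable Φ :=
    (((hrpm hq2).comp hgm.norm).smul hgm).sub (((hrpm hq2).comp hfm.norm).smul hfm)
  have hfint : Integrable (fun x => ‖f x‖ ^ p) μ := by
    refine ⟨((hrpm hp0.le).comp hfm.norm).aestronglyMeasurable, ?_⟩
    rw [hasFiniteIntegral_iff_ofReal
      (Filter.Eventually.of_forall fun x => Real.rpow_nonneg (norm_nonneg _) _)]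
    exact hfp
  have hgint : Integrable (fun x => ‖g x‖ ^ p) μ := by
    refine ⟨((hrpm hp0.le).comp hgm.norm).aestronglyMeasurable, ?_⟩
    rw [hasFiniteIntegral_iff_ofReal
      (Filter.Eventually.of_forall fun x => Real.rpow_nonneg (norm_nonneg _) _)]
    exact hgp
  have hΦp' : ∀ x, ‖Φ x‖ ^ p' ≤ 2 ^ p' * (‖f x‖ ^ p + ‖g x‖ ^ p) := by
    intro x
    set sf := ‖f x‖ with hsf
    set sg := ‖g x‖ with hsg
    have hsf0 : 0 ≤ sf := norm_nonneg _
    have hsg0 : 0 ≤ sg := norm_nonneg _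
    set m := max sf sg with hm
    have hm0 : 0 ≤ m := le_max_of_le_left hsf0
    have hnorm : ‖Φ x‖ ≤ sg ^ (p - 1) + sf ^ (p - 1) := by
      have h1 : ‖Φ x‖ ≤ ‖(‖g x‖ : ℝ) ^ (p - 2) • g x‖ + ‖(‖f x‖ : ℝ) ^ (p - 2) • f x‖ :=
        norm_sub_le _ _
      have h2 : ‖(‖g x‖ : ℝ) ^ (p - 2) • g x‖ = sg ^ (p - 1) := by
        rw [norm_smul, Real.norm_of_nonneg (Real.rpow_nonneg hsg0 _),
          rpow_mul_self' hsg0 (q := p - 2) (by linarith), show p - 2 + 1 = p - 1 by ring]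
      have h3 : ‖(‖f x‖ : ℝ) ^ (p - 2) • f x‖ = sf ^ (p - 1) := by
        rw [norm_smul, Real.norm_of_nonneg (Real.rpow_nonneg hsf0 _),
          rpow_mul_self' hsf0 (q := p - 2) (by linarith), show p - 2 + 1 = p - 1 by ring]
      rw [h2, h3] at h1; exact h1
    have hmax : sg ^ (p - 1) + sf ^ (p - 1) ≤ 2 * m ^ (p - 1) := by
      have h1 : sg ^ (p - 1) ≤ m ^ (p - 1) :=
        Real.rpow_le_rpow hsg0 (le_max_right _ _) (by linarith)
      have h2 : sf ^ (p - 1) ≤ m ^ (p - 1) :=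
        Real.rpow_le_rpow hsf0 (le_max_left _ _) (by linarith)
      linarith
    have step1 : ‖Φ x‖ ^ p' ≤ (2 * m ^ (p - 1)) ^ p' :=
      Real.rpow_le_rpow (norm_nonneg _) (le_trans hnorm hmax) (le_of_lt hp'pos)
    have step2 : (2 * m ^ (p - 1)) ^ p' = 2 ^ p' * m ^ p := by
      rw [Real.mul_rpow (by norm_num) (Real.rpow_nonneg hm0 _),
        ← Real.rpow_mul hm0 (p - 1) p', hpp']
    have step3 : m ^ p ≤ sf ^ p + sg ^ p := by
      rcases max_cases sf sg with ⟨h, _⟩ | ⟨h, _⟩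
      · rw [hm, h]; nlinarith [Real.rpow_nonneg hsg0 p]
      · rw [hm, h]; nlinarith [Real.rpow_nonneg hsf0 p]
    calc ‖Φ x‖ ^ p' ≤ 2 ^ p' * m ^ p := by rw [← step2]; exact step1
      _ ≤ 2 ^ p' * (sf ^ p + sg ^ p) := by
          apply mul_le_mul_of_nonneg_left step3 (Real.rpow_nonneg (by norm_num) _)
  have hΦint : Integrable (fun x => ‖Φ x‖ ^ p') μ := by
    refine Integrable.mono' ((hfint.add hgint).const_mul ((2:ℝ) ^ p'))
      (((hrpm hp'pos.le).comp hΦm.norm)).aestronglyMeasurable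
      (Filter.Eventually.of_forall fun x => ?_)
    rw [Real.norm_of_nonneg (Real.rpow_nonneg (norm_nonneg _) _)]
    exact hΦp' x
  have hkey : ∀ x, (2 ^ (2 - p)) ^ p' * ‖g x - f x‖ ^ p ≤ ‖Φ x‖ ^ p' := by
    intro x
    have h := key_vec p hp (f x) (g x)
    have h2 : (2 ^ (2 - p) * ‖g x - f x‖ ^ (p - 1)) ^ p' ≤ ‖Φ x‖ ^ p' :=
      Real.rpow_le_rpow (by positivity) h (le_of_lt hp'pos)
    rwa [Real.mul_rpow (by positivity) (Real.rpow_nonneg (norm_nonneg _) _),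
      ← Real.rpow_mul (norm_nonneg _), hpp'] at h2
  have hmono : ∫ x, (2 ^ (2 - p)) ^ p' * ‖g x - f x‖ ^ p ∂μ ≤ ∫ x, ‖Φ x‖ ^ p' ∂μ :=
    integral_mono_of_nonneg (Filter.Eventually.of_forall fun x => by positivity) hΦint
      (Filter.Eventually.of_forall hkey)
  rw [integral_const_mul] at hmono
  set Id := ∫ x, ‖g x - f x‖ ^ p ∂μ with hId_def
  have hId : 0 ≤ Id := integral_nonneg fun x => Real.rpow_nonneg (norm_nonneg _) _
  have hfin : ((2 ^ (2 - p)) ^ p' * Id) ^ (1 / p') ≤ (∫ x, ‖Φ x‖ ^ p' ∂μ) ^ (1 / p') :=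
    Real.rpow_le_rpow (by positivity) hmono (by positivity)
  have hc2 : (0:ℝ) ≤ 2 ^ (2 - p) := le_of_lt (Real.rpow_pos_of_pos two_pos _)
  have hLHS : ((2 ^ (2 - p)) ^ p' * Id) ^ (1 / p')
      = 2 ^ (2 - p) * (Id ^ (1 / p)) ^ (p - 1) := by
    rw [Real.mul_rpow (Real.rpow_nonneg hc2 _) hId,
      ← Real.rpow_mul hc2, mul_one_div_cancel (ne_of_gt hp'pos), Real.rpow_one,
      ← Real.rpow_mul hId, hinv]
  rw [← hLHS]
  exact hfin
end

section
/- Let 1 < p < 2 and let U, V be p-integrable vector fields on a measure space. Then ∫_Ω |U − V|^p dμ ≤ ( (1/(p − 1)) ∫_Ω (|U|^{p−2} U − |V|^{p−2} V) · (U − V) dμ )^{p/2} · ( 2 ∫_Ω |U|^p dμ + 2 ∫_Ω |V|^p dμ )^{(2−p)/2}; here the integrand (|U|^{p−2} U − |V|^{p−2} V) · (U − V) is nonnegative pointwise. -/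
/-!
Write `s = ‖a‖`, `t = ‖b‖`, `r = ⟪a, b⟫`. Both `(p - 1) ‖a - b‖² (s + t)^(p-2)` and
`⟪‖a‖^(p-2) a - ‖b‖^(p-2) b, a - b⟫` are affine in `r ∈ [-st, st]`, so the pointwise
inequality between them reduces to the collinear cases `r = ± st`, which are one-variable facts
about the concave function `x ↦ x^(p-1)`. Writing `‖a - b‖^p` as
`(‖a - b‖² (s + t)^(p-2))^(p/2) ((s + t)^p)^((2-p)/2)`, Hölder's inequality with the exponents
`p/2 + (2 - p)/2 = 1` and `(s + t)^p ≤ 2 (s^p + t^p)` give the integral estimate.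
-/

open MeasureTheory

namespace Real

variable {p s t : ℝ}

lemma rpow_sub_one_mul_self_s17 {x y : ℝ} (hx : 0 ≤ x) (hy : y ≠ 0) :
    x ^ (y - 1) * x = x ^ y := by
  rw [← rpow_add_one' hx (by simpa using hy), sub_add_cancel]

lemma rpow_sub_two_mul_self (hp : p ≠ 1) {x : ℝ} (hx : 0 ≤ x) :
    x ^ (p - 2) * x = x ^ (p - 1) := by
  rw [show p - 2 = p - 1 - 1 by ring, rpow_sub_one_mul_self_s17 hx (sub_ne_zero.2 hp)]

lemma sq_mul_rpow_sub_two {u : ℝ} (hu : 0 ≤ u) (hp : p ≠ 0) :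
    u ^ 2 * u ^ (p - 2) = u ^ p := by
  rw [← rpow_natCast, ← rpow_add' hu (by simpa using hp)]
  norm_num

lemma sub_one_mul_sub_mul_rpow_le (hp1 : 1 ≤ p) (hp2 : p ≤ 2) (ht : 0 ≤ t) (hts : t ≤ s) :
    (p - 1) * (s - t) * s ^ (p - 2) ≤ s ^ (p - 1) - t ^ (p - 1) := by
  rcases (ht.trans hts).eq_or_lt with rfl | hs
  · simp [le_antisymm hts ht]
  have hBernoulli := rpow_one_add_le_one_add_mul_self (s := t / s - 1)
    (by linarith [div_nonneg ht hs.le]) (p := p - 1) (by linarith) (by linarith)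
  rw [add_sub_cancel, div_rpow ht hs.le, div_le_iff₀ (rpow_pos_of_pos hs _)] at hBernoulli
  have hsp : s ^ (p - 1) = s ^ (p - 2) * s := by
    rw [← rpow_add_one hs.ne']; ring_nf
  rw [hsp] at hBernoulli ⊢
  have hts' : (t / s - 1) * s = t - s := by field_simp
  linear_combination hBernoulli + (p - 1) * s ^ (p - 2) * hts'

lemma sub_one_mul_sq_mul_add_rpow_le (hp1 : 1 ≤ p) (hp2 : p ≤ 2) (hs : 0 ≤ s) (ht : 0 ≤ t) :
    (p - 1) * (s - t) ^ 2 * (s + t) ^ (p - 2) ≤ (s ^ (p - 1) - t ^ (p - 1)) * (s - t) := by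
  wlog hts : t ≤ s generalizing s t
  · have := this ht hs (le_of_not_ge hts)
    rw [add_comm] at this
    linarith
  rcases (ht.trans hts).eq_or_lt with rfl | hs
  · simp [le_antisymm hts ht]
  have hweight : (s + t) ^ (p - 2) ≤ s ^ (p - 2) :=
    rpow_le_rpow_of_nonpos hs (by linarith) (by linarith)
  have htangent := sub_one_mul_sub_mul_rpow_le hp1 hp2 ht hts
  have hst : 0 ≤ s - t := by linarith
  calc (p - 1) * (s - t) ^ 2 * (s + t) ^ (p - 2)
      ≤ (p - 1) * (s - t) * s ^ (p - 2) * (s - t) := by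
        have : 0 ≤ (p - 1) * (s - t) ^ 2 := by positivity
        nlinarith [mul_le_mul_of_nonneg_left hweight this]
    _ ≤ (s ^ (p - 1) - t ^ (p - 1)) * (s - t) := mul_le_mul_of_nonneg_right htangent hst

lemma add_rpow_le_rpow_sub_one_add_mul (hp1 : 1 ≤ p) (hp2 : p ≤ 2) (hs : 0 ≤ s)
    (ht : 0 ≤ t) :
    (s + t) ^ p ≤ (s ^ (p - 1) + t ^ (p - 1)) * (s + t) := by
  rw [← rpow_sub_one_mul_self_s17 (by positivity) (by linarith)]
  exact mul_le_mul_of_nonneg_right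
    (rpow_add_le_add_rpow hs ht (by linarith) (by linarith)) (by positivity)

lemma sub_one_mul_add_sq_mul_add_rpow_le (hp1 : 1 ≤ p) (hp2 : p ≤ 2) (hs : 0 ≤ s)
    (ht : 0 ≤ t) :
    (p - 1) * (s + t) ^ 2 * (s + t) ^ (p - 2) ≤ (s ^ (p - 1) + t ^ (p - 1)) * (s + t) := by
  have hst : 0 ≤ s + t := add_nonneg hs ht
  rw [mul_assoc, sq_mul_rpow_sub_two hst (by linarith)]
  calc (p - 1) * (s + t) ^ p ≤ (s + t) ^ p :=
        mul_le_of_le_one_left (rpow_nonneg hst _) (by linarith)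
    _ ≤ (s ^ (p - 1) + t ^ (p - 1)) * (s + t) := add_rpow_le_rpow_sub_one_add_mul hp1 hp2 hs ht

lemma rpow_sub_one_add_mul_add_le (hp1 : 1 ≤ p) (hs : 0 ≤ s) (ht : 0 ≤ t) :
    (s ^ (p - 1) + t ^ (p - 1)) * (s + t) ≤ 2 * (s ^ p + t ^ p) := by
  have hp0 : p ≠ 0 := by linarith
  have hmono : 0 ≤ (s ^ (p - 1) - t ^ (p - 1)) * (s - t) := by
    rcases le_total t s with h | h
    · exact mul_nonneg (sub_nonneg.2 (rpow_le_rpow ht h (by linarith))) (sub_nonneg.2 h)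
    · exact mul_nonneg_of_nonpos_of_nonpos (sub_nonpos.2 (rpow_le_rpow hs h (by linarith)))
        (sub_nonpos.2 h)
  linear_combination hmono + 2 * rpow_sub_one_mul_self_s17 hs hp0 + 2 * rpow_sub_one_mul_self_s17 ht hp0

lemma add_rpow_le_two_mul_add_rpow (hp1 : 1 ≤ p) (hp2 : p ≤ 2) (hs : 0 ≤ s) (ht : 0 ≤ t) :
    (s + t) ^ p ≤ 2 * (s ^ p + t ^ p) :=
  (add_rpow_le_rpow_sub_one_add_mul hp1 hp2 hs ht).trans (rpow_sub_one_add_mul_add_le hp1 hs ht)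

lemma rpow_le_rpow_mul_rpow_of_sq_mul_rpow_le {d u K : ℝ} (hp : 0 < p) (hd : 0 ≤ d)
    (hdu : d ≤ u) (h : d ^ 2 * u ^ (p - 2) ≤ K) :
    d ^ p ≤ K ^ (p / 2) * (u ^ p) ^ ((2 - p) / 2) := by
  rcases (hd.trans hdu).eq_or_lt with rfl | hu
  · have hK : 0 ≤ K := (mul_nonneg (sq_nonneg d) (rpow_nonneg le_rfl _)).trans h
    rw [le_antisymm hdu hd, zero_rpow hp.ne']
    exact mul_nonneg (rpow_nonneg hK _) (rpow_nonneg le_rfl _)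
  have hsplit : d ^ p = (d ^ 2 * u ^ (p - 2)) ^ (p / 2) * (u ^ p) ^ ((2 - p) / 2) := by
    rw [mul_rpow (by positivity) (rpow_nonneg hu.le _), ← rpow_natCast, ← rpow_mul hd,
      ← rpow_mul hu.le, ← rpow_mul hu.le, mul_assoc, ← rpow_add hu]
    ring_nf
    rw [rpow_zero, mul_one]
  rw [hsplit]
  gcongr

end Real

open Real

section InnerProductSpace

variable {F : Type*} [NormedAddCommGroup F] [InnerProductSpace ℝ F] {p : ℝ}

lemma inner_rpow_smul_sub_rpow_smul (p : ℝ) (a b : F) :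
    inner ℝ (‖a‖ ^ (p - 2) • a - ‖b‖ ^ (p - 2) • b) (a - b)
      = ‖a‖ ^ (p - 2) * ‖a‖ ^ 2 + ‖b‖ ^ (p - 2) * ‖b‖ ^ 2
        - (‖a‖ ^ (p - 2) + ‖b‖ ^ (p - 2)) * inner ℝ a b := by
  simp only [inner_sub_left, inner_sub_right, real_inner_smul_left, real_inner_self_eq_norm_sq,
    real_inner_comm a b]
  ring

theorem sub_one_mul_norm_sub_sq_mul_rpow_le_inner (hp1 : 1 < p) (hp2 : p ≤ 2) (a b : F) :
    (p - 1) * ‖a - b‖ ^ 2 * (‖a‖ + ‖b‖) ^ (p - 2)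
      ≤ inner ℝ (‖a‖ ^ (p - 2) • a - ‖b‖ ^ (p - 2) • b) (a - b) := by
  obtain ⟨hr₁, hr₂⟩ := abs_le.1 (abs_real_inner_le_norm a b)
  have hE₁ := sub_one_mul_sq_mul_add_rpow_le hp1.le hp2 (norm_nonneg a) (norm_nonneg b)
  have hE₂ := sub_one_mul_add_sq_mul_add_rpow_le hp1.le hp2 (norm_nonneg a) (norm_nonneg b)
  rw [← rpow_sub_two_mul_self hp1.ne' (norm_nonneg a),
    ← rpow_sub_two_mul_self hp1.ne' (norm_nonneg b)] at hE₁ hE₂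
  rw [inner_rpow_smul_sub_rpow_smul, norm_sub_sq_real]
  -- both sides are affine in `⟪a, b⟫ ∈ [-‖a‖‖b‖, ‖a‖‖b‖]`; `hE₁`, `hE₂` are the endpoint cases
  rcases le_total 0 (‖a‖ ^ (p - 2) + ‖b‖ ^ (p - 2) - 2 * (p - 1) * (‖a‖ + ‖b‖) ^ (p - 2))
    with hslope | hslope
  · linear_combination hE₁ + mul_nonneg hslope (sub_nonneg.2 hr₂)
  · linear_combination hE₂ +
      mul_nonneg_of_nonpos_of_nonpos hslope (neg_nonpos.2 (neg_le_iff_add_nonneg.1 hr₁))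

theorem inner_rpow_smul_sub_rpow_smul_nonneg (hp1 : 1 < p) (hp2 : p ≤ 2) (a b : F) :
    0 ≤ inner ℝ (‖a‖ ^ (p - 2) • a - ‖b‖ ^ (p - 2) • b) (a - b) :=
  le_trans (by have := hp1.le; positivity) (sub_one_mul_norm_sub_sq_mul_rpow_le_inner hp1 hp2 a b)

theorem inner_rpow_smul_sub_rpow_smul_le (hp1 : 1 < p) (a b : F) :
    inner ℝ (‖a‖ ^ (p - 2) • a - ‖b‖ ^ (p - 2) • b) (a - b)
      ≤ 2 * (‖a‖ ^ p + ‖b‖ ^ p) := by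
  have hr := neg_le_of_abs_le (abs_real_inner_le_norm a b)
  have hσ := rpow_sub_two_mul_self hp1.ne' (norm_nonneg a)
  have hτ := rpow_sub_two_mul_self hp1.ne' (norm_nonneg b)
  have hweights : 0 ≤ ‖a‖ ^ (p - 2) + ‖b‖ ^ (p - 2) := by positivity
  rw [inner_rpow_smul_sub_rpow_smul]
  calc _ ≤ ‖a‖ ^ (p - 2) * ‖a‖ ^ 2 + ‖b‖ ^ (p - 2) * ‖b‖ ^ 2
          + (‖a‖ ^ (p - 2) + ‖b‖ ^ (p - 2)) * (‖a‖ * ‖b‖) := by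
          linear_combination mul_nonneg hweights (neg_le_iff_add_nonneg.1 hr)
    _ = (‖a‖ ^ (p - 1) + ‖b‖ ^ (p - 1)) * (‖a‖ + ‖b‖) := by rw [← hσ, ← hτ]; ring
    _ ≤ 2 * (‖a‖ ^ p + ‖b‖ ^ p) :=
        rpow_sub_one_add_mul_add_le hp1.le (norm_nonneg a) (norm_nonneg b)

theorem norm_sub_rpow_le_inner_rpow_mul_rpow (hp1 : 1 < p) (hp2 : p ≤ 2) (a b : F) :
    ‖a - b‖ ^ p ≤ (1 / (p - 1) * inner ℝ (‖a‖ ^ (p - 2) • a - ‖b‖ ^ (p - 2) • b) (a - b))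
        ^ (p / 2) * ((‖a‖ + ‖b‖) ^ p) ^ ((2 - p) / 2) := by
  refine rpow_le_rpow_mul_rpow_of_sq_mul_rpow_le (by linarith) (norm_nonneg _)
    (norm_sub_le a b) ?_
  rw [one_div_mul_eq_div, le_div_iff₀' (by linarith), ← mul_assoc]
  exact sub_one_mul_norm_sub_sq_mul_rpow_le_inner hp1 hp2 a b

end InnerProductSpace

section Holder

variable {Ω : Type*} [MeasurableSpace Ω] {μ : Measure Ω} {f g : Ω → ℝ} {a b : ℝ}

theorem MeasureTheory.Integrable.rpow_mul_rpow (hf0 : 0 ≤ᵐ[μ] f) (hg0 : 0 ≤ᵐ[μ] g)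
    (hf : Integrable f μ) (hg : Integrable g μ) (ha : 0 ≤ a) (hb : 0 ≤ b) (hab : a + b = 1) :
    Integrable (fun x ↦ f x ^ a * g x ^ b) μ := by
  refine ((hf.const_mul a).add (hg.const_mul b)).mono'
    ((hf.aemeasurable.pow_const a).mul (hg.aemeasurable.pow_const b)).aestronglyMeasurable ?_
  filter_upwards [hf0, hg0] with x hfx hgx
  rw [Real.norm_of_nonneg (mul_nonneg (rpow_nonneg hfx a) (rpow_nonneg hgx b))]
  exact geom_mean_le_arith_mean2_weighted ha hb hfx hgx hab

theorem integral_rpow_mul_rpow_le_s17 (hf0 : 0 ≤ᵐ[μ] f) (hg0 : 0 ≤ᵐ[μ] g)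
    (hf : Integrable f μ) (hg : Integrable g μ) (ha : 0 ≤ a) (hb : 0 ≤ b) (hab : a + b = 1) :
    ∫ x, f x ^ a * g x ^ b ∂μ ≤ (∫ x, f x ∂μ) ^ a * (∫ x, g x ∂μ) ^ b := by
  have hfg0 : 0 ≤ᵐ[μ] fun x ↦ f x ^ a * g x ^ b := by
    filter_upwards [hf0, hg0] with x hfx hgx
    exact mul_nonneg (Real.rpow_nonneg hfx a) (Real.rpow_nonneg hgx b)
  have hofReal : (fun x ↦ ENNReal.ofReal (f x ^ a * g x ^ b)) =ᵐ[μ]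
      fun x ↦ ENNReal.ofReal (f x) ^ a * ENNReal.ofReal (g x) ^ b := by
    filter_upwards [hf0, hg0] with x hfx hgx
    rw [ENNReal.ofReal_mul (rpow_nonneg hfx a), ENNReal.ofReal_rpow_of_nonneg hfx ha,
      ENNReal.ofReal_rpow_of_nonneg hgx hb]
  have hHolder := ENNReal.lintegral_mul_norm_pow_le hf.aemeasurable.ennreal_ofReal
    hg.aemeasurable.ennreal_ofReal ha hb hab
  rw [integral_eq_lintegral_of_nonneg_ae hfg0 (hf.rpow_mul_rpow hf0 hg0 hg ha hb hab).1,
    integral_eq_lintegral_of_nonneg_ae hf0 hf.1, integral_eq_lintegral_of_nonneg_ae hg0 hg.1,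
    ENNReal.toReal_rpow, ENNReal.toReal_rpow, ← ENNReal.toReal_mul, lintegral_congr_ae hofReal]
  refine ENNReal.toReal_mono ?_ hHolder
  exact ENNReal.mul_ne_top (ENNReal.rpow_ne_top_of_nonneg ha hf.lintegral_lt_top.ne)
    (ENNReal.rpow_ne_top_of_nonneg hb hg.lintegral_lt_top.ne)

end Holder

section Integrals

variable {Ω F : Type*} [MeasurableSpace Ω] {μ : Measure Ω} [NormedAddCommGroup F] {p : ℝ}
  {U V : Ω → F}

lemma integrable_norm_rpow_of_lintegral_lt_top_s17 (hU : AEStronglyMeasurable U μ)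
    (hUp : ∫⁻ x, ENNReal.ofReal (‖U x‖ ^ p) ∂μ < ⊤) :
    Integrable (fun x ↦ ‖U x‖ ^ p) μ :=
  (lintegral_ofReal_ne_top_iff_integrable (hU.norm.aemeasurable.pow_const p).aestronglyMeasurable
    (ae_of_all _ fun _ ↦ rpow_nonneg (norm_nonneg _) p)).1 hUp.ne

lemma integrable_add_norm_rpow (hp1 : 1 ≤ p) (hp2 : p ≤ 2) (hU : AEStronglyMeasurable U μ)
    (hV : AEStronglyMeasurable V μ) (hUi : Integrable (fun x ↦ ‖U x‖ ^ p) μ)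
    (hVi : Integrable (fun x ↦ ‖V x‖ ^ p) μ) :
    Integrable (fun x ↦ (‖U x‖ + ‖V x‖) ^ p) μ := by
  refine ((hUi.add hVi).const_mul 2).mono'
    ((hU.norm.add hV.norm).aemeasurable.pow_const p).aestronglyMeasurable (ae_of_all _ fun _ ↦ ?_)
  rw [Real.norm_of_nonneg (rpow_nonneg (by positivity) p)]
  exact add_rpow_le_two_mul_add_rpow hp1 hp2 (norm_nonneg _) (norm_nonneg _)

lemma integral_add_norm_rpow_le (hp1 : 1 ≤ p) (hp2 : p ≤ 2) (hU : AEStronglyMeasurable U μ)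
    (hV : AEStronglyMeasurable V μ) (hUi : Integrable (fun x ↦ ‖U x‖ ^ p) μ)
    (hVi : Integrable (fun x ↦ ‖V x‖ ^ p) μ) :
    ∫ x, (‖U x‖ + ‖V x‖) ^ p ∂μ
      ≤ 2 * (∫ x, ‖U x‖ ^ p ∂μ) + 2 * ∫ x, ‖V x‖ ^ p ∂μ := by
  rw [← mul_add, ← integral_add hUi hVi, ← integral_const_mul]
  exact integral_mono (integrable_add_norm_rpow hp1 hp2 hU hV hUi hVi)
    ((hUi.add hVi).const_mul 2) fun _ ↦
      add_rpow_le_two_mul_add_rpow hp1 hp2 (norm_nonneg _) (norm_nonneg _)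

variable [InnerProductSpace ℝ F]

lemma integrable_inner_rpow_smul_sub_rpow_smul (hp1 : 1 < p) (hp2 : p ≤ 2)
    (hU : AEStronglyMeasurable U μ) (hV : AEStronglyMeasurable V μ)
    (hUi : Integrable (fun x ↦ ‖U x‖ ^ p) μ) (hVi : Integrable (fun x ↦ ‖V x‖ ^ p) μ) :
    Integrable
      (fun x ↦ inner ℝ (‖U x‖ ^ (p - 2) • U x - ‖V x‖ ^ (p - 2) • V x) (U x - V x)) μ := by
  have hJ : ∀ {W : Ω → F}, AEStronglyMeasurable W μ →
      AEStronglyMeasurable (fun x ↦ ‖W x‖ ^ (p - 2) • W x) μ := fun hW ↦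
    (hW.norm.aemeasurable.pow_const _).aestronglyMeasurable.smul hW
  refine ((hUi.add hVi).const_mul 2).mono' (((hJ hU).sub (hJ hV)).inner (hU.sub hV))
    (ae_of_all _ fun x ↦ ?_)
  rw [Real.norm_of_nonneg (inner_rpow_smul_sub_rpow_smul_nonneg hp1 hp2 _ _)]
  exact inner_rpow_smul_sub_rpow_smul_le hp1 (U x) (V x)

theorem integral_norm_sub_rpow_le (hp1 : 1 < p) (hp2 : p ≤ 2)
    (hU : AEStronglyMeasurable U μ) (hV : AEStronglyMeasurable V μ)
    (hUi : Integrable (fun x ↦ ‖U x‖ ^ p) μ) (hVi : Integrable (fun x ↦ ‖V x‖ ^ p) μ) :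
    ∫ x, ‖U x - V x‖ ^ p ∂μ
      ≤ (1 / (p - 1)
            * ∫ x, inner ℝ (‖U x‖ ^ (p - 2) • U x - ‖V x‖ ^ (p - 2) • V x) (U x - V x) ∂μ)
          ^ (p / 2) * (2 * (∫ x, ‖U x‖ ^ p ∂μ) + 2 * ∫ x, ‖V x‖ ^ p ∂μ) ^ ((2 - p) / 2) := by
  set D : Ω → ℝ :=
    fun x ↦ inner ℝ (‖U x‖ ^ (p - 2) • U x - ‖V x‖ ^ (p - 2) • V x) (U x - V x)
  set W : Ω → ℝ := fun x ↦ (‖U x‖ + ‖V x‖) ^ p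
  have hc : 0 ≤ 1 / (p - 1) := one_div_nonneg.2 (sub_nonneg.2 hp1.le)
  have hD0 : ∀ x, 0 ≤ D x := fun x ↦ inner_rpow_smul_sub_rpow_smul_nonneg hp1 hp2 (U x) (V x)
  have hcD0 : 0 ≤ᵐ[μ] fun x ↦ 1 / (p - 1) * D x := ae_of_all _ fun x ↦ mul_nonneg hc (hD0 x)
  have hW0 : 0 ≤ᵐ[μ] W := ae_of_all _ fun x ↦ rpow_nonneg (by positivity) p
  have hcDi :=
    (integrable_inner_rpow_smul_sub_rpow_smul hp1 hp2 hU hV hUi hVi).const_mul (1 / (p - 1))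
  have hWi := integrable_add_norm_rpow hp1.le hp2 hU hV hUi hVi
  have hexp : p / 2 + (2 - p) / 2 = 1 := by ring
  calc ∫ x, ‖U x - V x‖ ^ p ∂μ
      ≤ ∫ x, (1 / (p - 1) * D x) ^ (p / 2) * W x ^ ((2 - p) / 2) ∂μ :=
        integral_mono_of_nonneg (ae_of_all _ fun x ↦ rpow_nonneg (norm_nonneg _) p)
          (hcDi.rpow_mul_rpow hcD0 hW0 hWi (by linarith) (by linarith) hexp)
          (ae_of_all _ fun x ↦ norm_sub_rpow_le_inner_rpow_mul_rpow hp1 hp2 (U x) (V x))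
    _ ≤ (∫ x, 1 / (p - 1) * D x ∂μ) ^ (p / 2) * (∫ x, W x ∂μ) ^ ((2 - p) / 2) :=
        integral_rpow_mul_rpow_le_s17 hcD0 hW0 hcDi hWi (by linarith) (by linarith) hexp
    _ ≤ _ := by
        rw [integral_const_mul]
        gcongr
        · exact rpow_nonneg (mul_nonneg hc (integral_nonneg hD0)) _
        · exact integral_add_norm_rpow_le hp1.le hp2 hU hV hUi hVi

end Integrals

theorem integral_monotonicity_p_lt_two_general
    (p : ℝ) (hp1 : 1 < p) (hp2 : p < 2)
    (N : ℕ)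
    {Ω : Type*} [MeasurableSpace Ω] (μ : Measure Ω)
    (U V : Ω → EuclideanSpace ℝ (Fin N))
    (hUm : Measurable U) (hVm : Measurable V)
    (hUp : ∫⁻ x, ENNReal.ofReal (‖U x‖ ^ p) ∂μ < ⊤)
    (hVp : ∫⁻ x, ENNReal.ofReal (‖V x‖ ^ p) ∂μ < ⊤) :
    (∀ x : Ω,
      0 ≤ (inner ℝ (‖U x‖ ^ (p - 2) • U x - ‖V x‖ ^ (p - 2) • V x) (U x - V x) : ℝ))
    ∧ ∫ x, ‖U x - V x‖ ^ p ∂μ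
        ≤ (1 / (p - 1)
              * ∫ x, (inner ℝ (‖U x‖ ^ (p - 2) • U x - ‖V x‖ ^ (p - 2) • V x)
                  (U x - V x) : ℝ) ∂μ) ^ (p / 2)
            * (2 * (∫ x, ‖U x‖ ^ p ∂μ) + 2 * ∫ x, ‖V x‖ ^ p ∂μ) ^ ((2 - p) / 2) :=
  ⟨fun x ↦ inner_rpow_smul_sub_rpow_smul_nonneg hp1 hp2.le (U x) (V x),
    integral_norm_sub_rpow_le hp1 hp2.le hUm.aestronglyMeasurable hVm.aestronglyMeasurable
      (integrable_norm_rpow_of_lintegral_lt_top_s17 hUm.aestronglyMeasurable hUp)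
      (integrable_norm_rpow_of_lintegral_lt_top_s17 hVm.aestronglyMeasurable hVp)⟩

/-- Integral monotonicity estimate for `1 < p < 2`:
`∫ |U - V|^p ≤ ((1/(p-1)) ∫ (|U|^{p-2}U - |V|^{p-2}V)·(U - V))^{p/2}
  (2∫|U|^p + 2∫|V|^p)^{(2-p)/2}`, with pointwise nonnegative integrand. -/
theorem integral_monotonicity_p_lt_two
    (p : ℝ) (hp1 : 1 < p) (hp2 : p < 2)
    (N : ℕ) (hN : 1 ≤ N)
    {Ω : Type*} [MeasurableSpace Ω] (μ : Measure Ω)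
    (U V : Ω → EuclideanSpace ℝ (Fin N))
    (hUm : Measurable U) (hVm : Measurable V)
    (hUp : ∫⁻ x, ENNReal.ofReal (‖U x‖ ^ p) ∂μ < ⊤)
    (hVp : ∫⁻ x, ENNReal.ofReal (‖V x‖ ^ p) ∂μ < ⊤) :
    (∀ x : Ω,
      0 ≤ (inner ℝ (‖U x‖ ^ (p - 2) • U x - ‖V x‖ ^ (p - 2) • V x) (U x - V x) : ℝ))
    ∧ ∫ x, ‖U x - V x‖ ^ p ∂μ
        ≤ (1 / (p - 1)
              * ∫ x, (inner ℝ (‖U x‖ ^ (p - 2) • U x - ‖V x‖ ^ (p - 2) • V x)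
                  (U x - V x) : ℝ) ∂μ) ^ (p / 2)
            * (2 * (∫ x, ‖U x‖ ^ p ∂μ) + 2 * ∫ x, ‖V x‖ ^ p ∂μ) ^ ((2 - p) / 2) :=
  integral_monotonicity_p_lt_two_general p hp1 hp2 N μ U V hUm hVm hUp hVp
end
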